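/- arXiv:2412.19778 — 8 statements merged into one kernel-verified Lean document; each statement's English description precedes it below -/
import Mathlib

section
/- Let n ≥ 2, let z = (z_1, …, z_n) ∈ ℂ^n, and let u = (u_1, …, u_n) ∈ ℂ^n with u_n ≠ 0. Let J(u) be the (n−1)×n complex matrix whose (j,k) entry is δ_{jk} for 1 ≤ k ≤ n−1 and −u_j/u_n for k = n, and let G(z) be the n×n Hermitian matrix with entries G(z)_{jk} = δ_{jk}/(1+‖z‖²) − (conj(z_j)·z_k)/(1+‖z‖²)², where ‖z‖² = ∑_{i=1}^n |z_i|². Then det(J(u) · G(z) · J(u)*) = (∑_{i=1}^n |u_i|² + |∑_{i=1}^n z_i u_i|²) / (|u_n|² · (1+‖z‖²)^n). -/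
set_option maxHeartbeats 1000000

open Matrix Finset

private lemma det_jacobian_fs_scalar (m : ℕ) (s A a B b Um Zm T Tc : ℂ)
    (hs : s ≠ 0) (ha : a ≠ 0) (hA : A ≠ 0)
    (hsplit : s = 1 + Zm + B * b) :
    (s ^ m)⁻¹ *
      ((1 + Um / (A * a)) *
          (1 + -(s⁻¹ * ((A * a * Zm - A * B * T - a * b * Tc + B * b * Um) / (A * a)))) +
        s⁻¹ * ((B * Um - a * Tc) / (A * a)) * ((b * Um - A * T) / (A * a))) =
    (Um + A * a + (Tc + B * A) * (T + b * a)) / (A * a * s ^ (m + 1)) := by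
  set d : ℂ := A * a with hddef
  have hd : d ≠ 0 := mul_ne_zero hA ha
  have hds : d * s ≠ 0 := mul_ne_zero hd hs
  set N : ℂ := A * a * Zm - A * B * T - a * b * Tc + B * b * Um with hN
  have h2 : 1 + Um / d = (d + Um) / d := by
    rw [add_div, div_self hd]
  have h3 : 1 + -(s⁻¹ * (N / d)) = (d * s - N) / (d * s) := by
    rw [inv_mul_eq_div, div_div, ← sub_eq_add_neg, sub_div, div_self hds]
  have h5 : s⁻¹ * ((B * Um - a * Tc) / d) * ((b * Um - A * T) / d) =
      ((B * Um - a * Tc) * (b * Um - A * T)) / (d * (d * s)) := by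
    rw [inv_mul_eq_div, div_div, div_mul_div_comm]
    congr 1
    ring
  rw [h2, h3, h5, div_mul_div_comm, ← add_div, inv_mul_eq_div, div_div]
  have hW : (d + Um) * (d * s - N) + (B * Um - a * Tc) * (b * Um - A * T) =
      (Um + A * a + (Tc + B * A) * (T + b * a)) * d := by
    rw [hddef, hN]
    linear_combination (A * a * (A * a + Um)) * hsplit
  rw [hW]
  have hden : d * (d * s) * s ^ m = d * (d * s ^ (m + 1)) := by
    rw [pow_succ]; ring
  rw [hden, mul_comm _ d, mul_div_mul_left _ _ hd, hddef]


/-- For `n = m + 1 ≥ 2`, `z, u ∈ ℂⁿ` with `u_n ≠ 0`, the elimination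
Jacobian `J` and the Fubini–Study matrix `G(z)` with entries
`G j k = δ_{jk}/(1+‖z‖²) − conj(z_j) z_k/(1+‖z‖²)²` satisfy
`det (J ⬝ G ⬝ Jᴴ) = (∑ |u_i|² + |∑ z_i u_i|²) / (|u_n|² (1+‖z‖²)ⁿ)`. -/
theorem det_jacobian_fubiniStudy_jacobian
    (m : ℕ) (hm : 1 ≤ m) (z u : Fin (m + 1) → ℂ)
    (hu : u (Fin.last m) ≠ 0)
    (J : Matrix (Fin m) (Fin (m + 1)) ℂ)
    (hJ : ∀ (j : Fin m) (k : Fin (m + 1)),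
      J j k =
        if k = Fin.castSucc j then 1
        else if k = Fin.last m then -u (Fin.castSucc j) / u (Fin.last m)
        else 0)
    (G : Matrix (Fin (m + 1)) (Fin (m + 1)) ℂ)
    (hG : ∀ (j k : Fin (m + 1)),
      G j k =
        (if j = k then 1 else 0) / ((1 + ∑ i, ‖z i‖ ^ 2 : ℝ) : ℂ)
          - starRingEnd ℂ (z j) * z k / (((1 + ∑ i, ‖z i‖ ^ 2 : ℝ) : ℂ)) ^ 2) :
    (J * G * J.conjTranspose).det =
      ((((∑ i, ‖u i‖ ^ 2) + ‖∑ i, z i * u i‖ ^ 2) /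
        (‖u (Fin.last m)‖ ^ 2 * (1 + ∑ i, ‖z i‖ ^ 2) ^ (m + 1) : ℝ) : ℝ) : ℂ) := by
  set s : ℂ := ((1 + ∑ i, ‖z i‖ ^ 2 : ℝ) : ℂ) with hsdef
  have hs : s ≠ 0 := by
    rw [hsdef, Complex.ofReal_ne_zero]; positivity
  set a : ℂ := u (Fin.last m) with hadef
  have ha : a ≠ 0 := hu
  have hA : starRingEnd ℂ a ≠ 0 := by simpa using ha
  set b : ℂ := z (Fin.last m) with hbdef
  set c : Fin m → ℂ := fun j => -u (Fin.castSucc j) / a with hcdef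
  set v : Fin m → ℂ := fun j =>
    starRingEnd ℂ (z (Fin.castSucc j)) + c j * starRingEnd ℂ b with hvdef
  set U : Matrix (Fin m) (Fin 2) ℂ :=
    Matrix.of (fun j p => if p = 0 then c j else -(s⁻¹) * v j) with hUdef
  set V : Matrix (Fin 2) (Fin m) ℂ :=
    Matrix.of (fun p k => if p = 0 then starRingEnd ℂ (c k) else starRingEnd ℂ (v k)) with hVdef
  clear_value s a b c v U V
  have hrow : ∀ (j : Fin m) (q : Fin (m + 1)),
      (J * G) j q = G (Fin.castSucc j) q + c j * G (Fin.last m) q := by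
    intro j q
    rw [Matrix.mul_apply, Fin.sum_univ_castSucc]
    have h1 : ∀ i : Fin m, J j (Fin.castSucc i) = if i = j then 1 else 0 := by
      intro i
      rw [hJ]
      simp [Fin.castSucc_inj, (Fin.castSucc_lt_last i).ne, eq_comm]
    have h2 : J j (Fin.last m) = c j := by
      rw [hJ, hcdef]
      simp [(Fin.castSucc_lt_last j).ne']
    simp only [h1, h2, ite_mul, one_mul, zero_mul]
    rw [Finset.sum_ite_eq' Finset.univ j (fun i => G (Fin.castSucc i) q)]
    simp [add_comm]
  have hM : J * G * J.conjTranspose = s⁻¹ • (1 + U * V) := by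
    ext j k
    rw [Matrix.mul_apply, Fin.sum_univ_castSucc]
    have h1 : ∀ i : Fin m, J.conjTranspose (Fin.castSucc i) k =
        if i = k then 1 else 0 := by
      intro i
      rw [Matrix.conjTranspose_apply, hJ]
      simp [Fin.castSucc_inj, (Fin.castSucc_lt_last i).ne, eq_comm]
    have h2 : J.conjTranspose (Fin.last m) k = starRingEnd ℂ (c k) := by
      rw [Matrix.conjTranspose_apply, hJ, hcdef]
      simp [map_div₀, (Fin.castSucc_lt_last k).ne']
    simp only [h1, h2, mul_ite, mul_one, mul_zero, hrow]
    rw [Finset.sum_ite_eq' Finset.univ k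
      (fun i => G (Fin.castSucc j) (Fin.castSucc i) + c j * G (Fin.last m) (Fin.castSucc i))]
    have hGjk : G (Fin.castSucc j) (Fin.castSucc k) =
        (if j = k then 1 else 0) / s - starRingEnd ℂ (z (Fin.castSucc j)) * z (Fin.castSucc k) / s ^ 2 := by
      rw [hG]; simp [Fin.castSucc_inj]
    have hGlk : G (Fin.last m) (Fin.castSucc k) =
        - (starRingEnd ℂ b * z (Fin.castSucc k)) / s ^ 2 := by
      rw [hG, hbdef]; simp [(Fin.castSucc_lt_last k).ne', Ne.symm ((Fin.castSucc_lt_last k).ne), neg_div]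
    have hGjl : G (Fin.castSucc j) (Fin.last m) =
        - (starRingEnd ℂ (z (Fin.castSucc j)) * b) / s ^ 2 := by
      rw [hG, hbdef]; simp [(Fin.castSucc_lt_last j).ne, neg_div]
    have hGll : G (Fin.last m) (Fin.last m) = 1 / s - starRingEnd ℂ b * b / s ^ 2 := by
      rw [hG, hbdef]; simp
    rw [hGjk, hGlk, hGjl, hGll]
    rw [Matrix.smul_apply, Matrix.add_apply, Matrix.one_apply, Matrix.mul_apply,
      Fin.sum_univ_two]
    simp only [hUdef, hVdef, Matrix.of_apply, if_pos, one_ne_zero, if_neg, Fin.one_eq_zero_iff,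
      Nat.succ_ne_self, ite_true, ite_false, ne_eq, not_false_iff]
    rw [hcdef, hvdef]
    simp only [hcdef, map_add, _root_.map_mul, map_div₀, map_neg, Complex.conj_conj]
    by_cases hjk : j = k <;> simp only [hjk, smul_eq_mul, Finset.mem_univ, if_true, if_false, ite_true, ite_false, eq_self_iff_true] <;> ring
  rw [hM, Matrix.det_smul, Matrix.det_one_add_mul_comm, Matrix.det_fin_two]
  simp only [Matrix.add_apply, Matrix.one_apply, Matrix.mul_apply, Fin.sum_univ_two,
    hUdef, hVdef, Matrix.of_apply, Fintype.card_fin]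
  norm_num
  set Um : ℂ := ∑ j : Fin m, starRingEnd ℂ (u (Fin.castSucc j)) * u (Fin.castSucc j) with hUm
  set Zm : ℂ := ∑ j : Fin m, starRingEnd ℂ (z (Fin.castSucc j)) * z (Fin.castSucc j) with hZm
  set T : ℂ := ∑ j : Fin m, z (Fin.castSucc j) * u (Fin.castSucc j) with hT
  set Tc : ℂ := ∑ j : Fin m, starRingEnd ℂ (z (Fin.castSucc j)) * starRingEnd ℂ (u (Fin.castSucc j)) with hTc
  set A : ℂ := starRingEnd ℂ a with hAdef
  set B : ℂ := starRingEnd ℂ b with hBdef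
  have hP : ∑ x : Fin m, starRingEnd ℂ (c x) * c x = Um / (A * a) := by
    rw [hUm, Finset.sum_div]
    refine Finset.sum_congr rfl fun x _ => ?_
    simp only [hcdef, hAdef, map_div₀, map_neg]
    ring
  have hQv : ∑ x : Fin m, starRingEnd ℂ (v x) * (s⁻¹ * v x) =
      s⁻¹ * ((A * a * Zm - A * B * T - a * b * Tc + B * b * Um) / (A * a)) := by
    rw [hUm, hZm, hT, hTc]
    simp only [Finset.mul_sum, ← Finset.sum_sub_distrib, ← Finset.sum_add_distrib,
      Finset.sum_div]
    refine Finset.sum_congr rfl fun x _ => ?_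
    simp only [hvdef, hcdef, hAdef, hBdef, map_add, _root_.map_mul, map_div₀, map_neg,
      Complex.conj_conj]
    field_simp [show starRingEnd ℂ a ≠ 0 from hA]
    ring
  have hRv : ∑ x : Fin m, starRingEnd ℂ (c x) * (s⁻¹ * v x) =
      s⁻¹ * ((B * Um - a * Tc) / (A * a)) := by
    rw [hUm, hTc]
    simp only [Finset.mul_sum, ← Finset.sum_sub_distrib, Finset.sum_div]
    refine Finset.sum_congr rfl fun x _ => ?_
    simp only [hvdef, hcdef, hAdef, hBdef, map_add, _root_.map_mul, map_div₀, map_neg,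
      Complex.conj_conj]
    field_simp
    ring
  have hR'v : ∑ x : Fin m, starRingEnd ℂ (v x) * c x = (b * Um - A * T) / (A * a) := by
    rw [hUm, hT]
    simp only [Finset.mul_sum, ← Finset.sum_sub_distrib, Finset.sum_div]
    refine Finset.sum_congr rfl fun x _ => ?_
    simp only [hvdef, hcdef, hAdef, hBdef, map_add, _root_.map_mul, map_div₀, map_neg,
      Complex.conj_conj]
    field_simp [show starRingEnd ℂ a ≠ 0 from hA]
    ring
  have habs : ∀ x : ℂ, ((‖x‖ : ℝ) : ℂ) ^ 2 = starRingEnd ℂ x * x := by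
    intro x
    rw [← Complex.ofReal_pow, Complex.sq_norm, Complex.normSq_eq_conj_mul_self]
  have hsum_u : (∑ x : Fin (m + 1), ((‖u x‖ : ℝ) : ℂ) ^ 2) = Um + A * a := by
    simp only [habs]
    rw [Fin.sum_univ_castSucc, hUm, hAdef, hadef]
  have hs2 : (1 + ∑ x : Fin (m + 1), ((‖z x‖ : ℝ) : ℂ) ^ 2) = s := by
    rw [hsdef]
    push_cast
    ring
  have hsplit : s = 1 + Zm + B * b := by
    rw [← hs2]
    simp only [habs]
    rw [Fin.sum_univ_castSucc, hZm, hBdef, hbdef]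
    ring
  have habs_t : ((‖∑ i, z i * u i‖ : ℝ) : ℂ) ^ 2 =
      (Tc + B * A) * (T + b * a) := by
    rw [habs, map_sum]
    congr 1
    · rw [Fin.sum_univ_castSucc, hTc, hAdef, hBdef, hadef, hbdef]
      simp [_root_.map_mul]
    · rw [Fin.sum_univ_castSucc, hT, hadef, hbdef]
  rw [hP, hQv, hRv, hR'v, hsum_u, hs2, habs_t, habs a, ← hAdef]
  exact det_jacobian_fs_scalar m s A a B b Um Zm T Tc hs ha hA hsplit
end

section
/- Let n ≥ 2 and let u : ℂ^{n+1} → ℂ be complex-differentiable (holomorphic) and homogeneous of degree n+1, i.e. u(λ·Z) = λ^{n+1}·u(Z) for all λ ∈ ℂ and Z ∈ ℂ^{n+1}. Let Z = (Z_0, Z_1, …, Z_n) ∈ ℂ^{n+1} satisfy Z_0 = 1, u(Z) = 0 and ∂u/∂Z_n(Z) ≠ 0. Write z = (Z_1, …, Z_n) and u_i = ∂u/∂Z_i(Z) for 0 ≤ i ≤ n. Let J be the (n−1)×n complex matrix whose (j,k) entry is δ_{jk} for 1 ≤ k ≤ n−1 and −u_j/u_n for k = n, and let G(z) be the n×n Hermitian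 matrix with entries G(z)_{jk} = δ_{jk}/(1+‖z‖²) − (conj(z_j)·z_k)/(1+‖z‖²)². Then det(J · G(z) · J*) = (∑_{i=0}^n |u_i|²) / (|u_n|² · (1+‖z‖²)^n). -/
open Matrix

lemma mul_vecMulVec' {p q r : Type*} [Fintype q] (A : Matrix p q ℂ) (x : q → ℂ) (y : r → ℂ) :
    A * Matrix.vecMulVec x y = Matrix.vecMulVec (A.mulVec x) y := by
  ext j l
  simp [Matrix.mul_apply, Matrix.vecMulVec_apply, Matrix.mulVec, dotProduct,
    Finset.sum_mul, mul_assoc]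

lemma vecMulVec_mul_conjTranspose' {p q r : Type*} [Fintype q] (x : p → ℂ) (y : q → ℂ)
    (B : Matrix r q ℂ) :
    Matrix.vecMulVec x y * B.conjTranspose
      = Matrix.vecMulVec x (star (B.mulVec (star y))) := by
  ext j l
  simp [Matrix.mul_apply, Matrix.vecMulVec_apply, Matrix.mulVec, dotProduct,
    Matrix.conjTranspose_apply, Finset.mul_sum, star_sum, mul_assoc, mul_comm, mul_left_comm]

lemma vecMulVec_conjTranspose' {p q : Type*} (x : p → ℂ) (y : q → ℂ) :
    (Matrix.vecMulVec x y).conjTranspose = Matrix.vecMulVec (star y) (star x) := by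
  ext j l
  simp [Matrix.vecMulVec_apply, Matrix.conjTranspose_apply, mul_comm]

lemma det_aux (p : ℕ) (S : ℂ) (v w : Fin p → ℂ) :
    (S⁻¹ • ((1 : Matrix (Fin p) (Fin p) ℂ) + Matrix.vecMulVec v (star v))
        - (S⁻¹ * S⁻¹) • Matrix.vecMulVec w (star w)).det
      = S⁻¹ ^ p *
        ((1 + ∑ l, star (v l) * v l) * (1 + ∑ l, -(S⁻¹ * star (w l)) * w l)
          - (∑ l, star (v l) * w l) * (∑ l, -(S⁻¹ * star (w l)) * v l)) := by
  set X : Matrix (Fin p) (Fin 2) ℂ := Matrix.of fun j t => if t = 0 then v j else w j with hX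
  set Y : Matrix (Fin 2) (Fin p) ℂ :=
    Matrix.of fun t l => if t = 0 then star (v l) else -(S⁻¹ * star (w l)) with hY
  have h1 : S⁻¹ • ((1 : Matrix (Fin p) (Fin p) ℂ) + Matrix.vecMulVec v (star v))
      - (S⁻¹ * S⁻¹) • Matrix.vecMulVec w (star w)
      = S⁻¹ • ((1 : Matrix (Fin p) (Fin p) ℂ) + X * Y) := by
    ext j l
    simp [hX, hY, Matrix.mul_apply, Fin.sum_univ_two, Matrix.vecMulVec_apply,
      Matrix.one_apply, Matrix.smul_apply, Matrix.sub_apply, Matrix.add_apply]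
    split_ifs <;> ring
  rw [h1, Matrix.det_smul, Matrix.det_one_add_mul_comm, Matrix.det_fin_two]
  simp [hX, hY, Matrix.mul_apply, Matrix.add_apply, Matrix.one_apply, Fintype.card_fin]

lemma scalar_key (p : ℕ) (S un cun c0 cc0 ζ cζ Q A : ℂ)
    (hun : un ≠ 0) (hcun : cun ≠ 0) (hS : S ≠ 0)
    (hSval : S = 1 + (A + ζ * cζ)) :
    S⁻¹ ^ p * ((1 + Q * (cun * un)⁻¹) *
        (1 - S⁻¹ * (A + cζ * (-(un⁻¹) * (-c0 - ζ * un)) + ζ * (-(cun⁻¹) * (-cc0 - cζ * cun))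
            + ζ * cζ * (Q * (cun * un)⁻¹)))
      + S⁻¹ * (-(cun⁻¹) * (-cc0 - cζ * cun) + cζ * (Q * (cun * un)⁻¹))
            * (-(un⁻¹) * (-c0 - ζ * un) + ζ * (Q * (cun * un)⁻¹)))
    = (c0 * cc0 + Q + un * cun) / ((un * cun) * S ^ (p + 1)) := by
  have hA : A = S - 1 - ζ * cζ := by rw [hSval]; ring
  subst hA
  rw [inv_pow]
  have hSp : S ^ p ≠ 0 := pow_ne_zero _ hS
  field_simp
  ring_nf

/-- Pullback of Fubini–Study Identity, Lemma C.3. Let `n = m + 2 ≥ 2`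
and let `u : ℂ^{n+1} → ℂ` be holomorphic and homogeneous of degree `n+1`. At a point `Z`
with `Z_0 = 1`, `u Z = 0` and `∂u/∂Z_n (Z) ≠ 0`, writing `z = (Z_1, …, Z_n)`,
`u_i = ∂u/∂Z_i (Z)`, `J` the elimination Jacobian and `G(z)` the Fubini–Study matrix,
we have `det (J ⬝ G ⬝ Jᴴ) = (∑_{i=0}^n |u_i|²) / (|u_n|² (1+‖z‖²)ⁿ)`. -/
theorem det_pullback_fubiniStudy
    (m : ℕ) (u : (Fin (m + 3) → ℂ) → ℂ)
    (hdiff : Differentiable ℂ u)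
    (hhom : ∀ (c : ℂ) (W : Fin (m + 3) → ℂ), u (c • W) = c ^ (m + 3) * u W)
    (Z : Fin (m + 3) → ℂ) (hZ0 : Z 0 = 1) (hZu : u Z = 0)
    (du : Fin (m + 3) → ℂ)
    (hdu : ∀ i, du i = fderiv ℂ u Z (Pi.single i 1))
    (hun : du (Fin.last (m + 2)) ≠ 0)
    (z : Fin (m + 2) → ℂ) (hz : ∀ i : Fin (m + 2), z i = Z i.succ)
    (J : Matrix (Fin (m + 1)) (Fin (m + 2)) ℂ)
    (hJ : ∀ (j : Fin (m + 1)) (k : Fin (m + 2)),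
      J j k =
        if k = Fin.castSucc j then 1
        else if k = Fin.last (m + 1) then
          -du (Fin.castSucc (Fin.succ j)) / du (Fin.last (m + 2))
        else 0)
    (G : Matrix (Fin (m + 2)) (Fin (m + 2)) ℂ)
    (hG : ∀ (j k : Fin (m + 2)),
      G j k =
        (if j = k then 1 else 0) / ((1 + ∑ i, ‖z i‖ ^ 2 : ℝ) : ℂ)
          - starRingEnd ℂ (z j) * z k / (((1 + ∑ i, ‖z i‖ ^ 2 : ℝ) : ℂ)) ^ 2) :
    (J * G * J.conjTranspose).det =
      (((∑ i, ‖du i‖ ^ 2) /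
        (‖du (Fin.last (m + 2))‖ ^ 2 *
          (1 + ∑ i, ‖z i‖ ^ 2) ^ (m + 2) : ℝ) : ℝ) : ℂ) := by
  classical
  -- abbreviations
  set un : ℂ := du (Fin.last (m + 2)) with hundef
  have hsun : star un ≠ 0 := star_ne_zero.mpr hun
  set c0 : ℂ := du 0 with hc0def
  set ζ : ℂ := z (Fin.last (m + 1)) with hζdef
  set Sr : ℝ := 1 + ∑ i, ‖z i‖ ^ 2 with hSrdef
  have hSrpos : 0 < Sr := by
    have : 0 ≤ ∑ i, ‖z i‖ ^ 2 := Finset.sum_nonneg fun i _ => sq_nonneg _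
    linarith
  set Sc : ℂ := (Sr : ℂ) with hScdef
  have hScne : Sc ≠ 0 := by
    simpa [hScdef] using Complex.ofReal_ne_zero.mpr hSrpos.ne'
  set v : Fin (m + 1) → ℂ :=
    fun j => -du (Fin.castSucc (Fin.succ j)) / un with hvdef
  set e : Fin (m + 2) → ℂ := fun k => if k = Fin.last (m + 1) then 1 else 0 with hedef
  set P : Matrix (Fin (m + 1)) (Fin (m + 2)) ℂ :=
    Matrix.of (fun j k => if k = Fin.castSucc j then 1 else 0) with hPdef
  set w : Fin (m + 1) → ℂ := J.mulVec (star z) with hwdef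
  set Q : ℂ := ∑ l : Fin (m + 1),
    du (Fin.castSucc (Fin.succ l)) * star (du (Fin.castSucc (Fin.succ l))) with hQdef
  set A : ℂ := ∑ l : Fin (m + 1),
    z (Fin.castSucc l) * star (z (Fin.castSucc l)) with hAdef
  -- Euler identity
  have euler : ∑ i, Z i * du i = 0 := by
    have hd : HasDerivAt (fun c : ℂ => c • Z) Z 1 := by
      simpa using (hasDerivAt_id (1 : ℂ)).smul_const Z
    have h1 : HasDerivAt (fun c : ℂ => u (c • Z)) (fderiv ℂ u Z Z) 1 := by
      have hu : HasFDerivAt u (fderiv ℂ u Z) ((1 : ℂ) • Z) := by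
        simpa using (hdiff Z).hasFDerivAt
      exact hu.comp_hasDerivAt 1 hd
    have h2 : (fun c : ℂ => u (c • Z)) = fun _ => 0 := by
      funext c; rw [hhom, hZu, mul_zero]
    have h0 : HasDerivAt (fun c : ℂ => u (c • Z)) 0 1 := by
      rw [h2]; exact hasDerivAt_const _ _
    have hz0 : fderiv ℂ u Z Z = 0 := h1.unique h0
    have hZsum : Z = ∑ i, Z i • (Pi.single i (1 : ℂ) : Fin (m + 3) → ℂ) := by
      funext j
      simp [Pi.single_apply, Finset.sum_apply]
    calc ∑ i, Z i * du i
        = fderiv ℂ u Z (∑ i, Z i • (Pi.single i (1 : ℂ) : Fin (m + 3) → ℂ)) := by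
          rw [map_sum]
          exact Finset.sum_congr rfl fun i _ => by rw [hdu, _root_.map_smul, smul_eq_mul]
      _ = fderiv ℂ u Z Z := by rw [← hZsum]
      _ = 0 := hz0
  have hEz : ∑ l : Fin (m + 1), z (Fin.castSucc l) * du (Fin.castSucc (Fin.succ l))
      = -c0 - ζ * un := by
    have h1 := euler
    rw [Fin.sum_univ_succ, hZ0, one_mul] at h1
    rw [Fin.sum_univ_castSucc] at h1
    have h2 : ∀ l : Fin (m + 1),
        Z (Fin.castSucc l).succ * du (Fin.castSucc l).succ
          = z (Fin.castSucc l) * du (Fin.castSucc (Fin.succ l)) := by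
      intro l
      rw [← hz, Fin.succ_castSucc]
    rw [Finset.sum_congr rfl fun l _ => h2 l] at h1
    rw [← hz, Fin.succ_last] at h1
    rw [← hζdef, ← hundef, ← hc0def] at h1
    linear_combination h1
  -- G decomposition
  have hGdec : G = Sc⁻¹ • (1 : Matrix (Fin (m + 2)) (Fin (m + 2)) ℂ)
      - (Sc⁻¹ * Sc⁻¹) • Matrix.vecMulVec (star z) z := by
    ext j k
    rw [hG]
    simp only [Matrix.sub_apply, Matrix.smul_apply, Matrix.one_apply, Matrix.vecMulVec_apply,
      Pi.star_apply, smul_eq_mul, starRingEnd_apply]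
    rw [pow_two]
    split_ifs <;> (rw [div_eq_mul_inv, div_eq_mul_inv, mul_inv]; ring)
  -- J decomposition
  have hJdec : J = P + Matrix.vecMulVec v e := by
    ext j k
    rw [hJ]
    simp only [Matrix.add_apply, hPdef, Matrix.of_apply, Matrix.vecMulVec_apply, hedef, hvdef]
    by_cases h1 : k = Fin.castSucc j
    · subst h1
      simp [(Fin.castSucc_lt_last j).ne]
    · by_cases h2 : k = Fin.last (m + 1)
      · subst h2
        simp [h1]
      · simp [h1, h2]
  have hstare : star e = e := by
    funext k
    simp [hedef, apply_ite (star : ℂ → ℂ)]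
  have hPe : P.mulVec (star e) = 0 := by
    funext j
    simp [Matrix.mulVec, dotProduct, hPdef, hedef, hstare, ite_mul, one_mul,
      zero_mul, Finset.sum_ite_eq', (Fin.castSucc_lt_last j).ne']
  have hvv : (Matrix.vecMulVec v e).mulVec (star e) = v := by
    funext j
    simp [Matrix.mulVec, dotProduct, Matrix.vecMulVec_apply, hstare, hedef,
      mul_ite, ite_mul, mul_one, mul_zero, zero_mul, Finset.sum_ite_eq']
  have hPP : P * P.conjTranspose = 1 := by
    ext j l
    simp [Matrix.mul_apply, Matrix.conjTranspose_apply, hPdef, Matrix.one_apply,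
      apply_ite (star : ℂ → ℂ), ite_mul, one_mul, zero_mul, Finset.sum_ite_eq',
      Fin.castSucc_inj, eq_comm]
  have hJJT : J * J.conjTranspose = 1 + Matrix.vecMulVec v (star v) := by
    rw [hJdec, Matrix.conjTranspose_add, vecMulVec_conjTranspose', Matrix.add_mul,
      Matrix.mul_add, Matrix.mul_add, hPP, mul_vecMulVec', hPe,
      vecMulVec_mul_conjTranspose', hPe, mul_vecMulVec', hvv]
    have hz1 : Matrix.vecMulVec (0 : Fin (m + 1) → ℂ) (star v) = 0 := by
      ext a b; simp [Matrix.vecMulVec_apply]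
    have hz2 : Matrix.vecMulVec v (star (0 : Fin (m + 1) → ℂ)) = 0 := by
      ext a b; simp [Matrix.vecMulVec_apply]
    rw [hz1, hz2]
    abel
  -- main matrix identity
  have hMGM : J * G * J.conjTranspose
      = Sc⁻¹ • ((1 : Matrix (Fin (m + 1)) (Fin (m + 1)) ℂ) + Matrix.vecMulVec v (star v))
        - (Sc⁻¹ * Sc⁻¹) • Matrix.vecMulVec w (star w) := by
    rw [hGdec, Matrix.mul_sub, Matrix.sub_mul, Matrix.mul_smul, Matrix.smul_mul,
      Matrix.mul_one, Matrix.mul_smul, Matrix.smul_mul, hJJT, mul_vecMulVec',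
      vecMulVec_mul_conjTranspose', ← hwdef]
  -- formula for w
  have hw : ∀ l, w l = star (z (Fin.castSucc l)) + star ζ * v l := by
    intro l
    rw [hwdef]
    simp only [Matrix.mulVec, dotProduct, Pi.star_apply]
    rw [Fin.sum_univ_castSucc]
    have h1 : ∀ k : Fin (m + 1), J l (Fin.castSucc k) * star (z (Fin.castSucc k))
        = (if k = l then 1 else 0) * star (z (Fin.castSucc k)) := by
      intro k
      rw [hJ]
      congr 1
      simp [Fin.castSucc_inj, (Fin.castSucc_lt_last k).ne]
    rw [Finset.sum_congr rfl fun k _ => h1 k, hJ]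
    simp only [(Fin.castSucc_lt_last l).ne', if_false, if_neg, ite_mul, one_mul, zero_mul,
      Finset.sum_ite_eq', Finset.mem_univ, if_true, if_pos rfl]
    rw [← hζdef, show -du (Fin.castSucc (Fin.succ l)) / un = v l from rfl]
    ring
  have hws : ∀ l, star (w l) = z (Fin.castSucc l) + ζ * star (v l) := by
    intro l
    rw [hw l]
    simp [star_add, star_mul']
  -- scalar sums
  have hVZ : ∑ l : Fin (m + 1), z (Fin.castSucc l) * v l = -un⁻¹ * (-c0 - ζ * un) := by
    have h1 : ∀ l : Fin (m + 1), z (Fin.castSucc l) * v l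
        = -un⁻¹ * (z (Fin.castSucc l) * du (Fin.castSucc (Fin.succ l))) := by
      intro l
      simp only [hvdef]
      rw [div_eq_mul_inv]
      ring
    rw [Finset.sum_congr rfl fun l _ => h1 l, ← Finset.mul_sum, hEz]
  have hVZs : ∑ l : Fin (m + 1), star (v l) * star (z (Fin.castSucc l))
      = -(star un)⁻¹ * (-(star c0) - star ζ * star un) := by
    have h1 : ∑ l : Fin (m + 1), star (v l) * star (z (Fin.castSucc l))
        = star (∑ l : Fin (m + 1), z (Fin.castSucc l) * v l) := by
      rw [star_sum]
      exact Finset.sum_congr rfl fun l _ => (StarMul.star_mul _ _).symm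
    rw [h1, hVZ]
    simp only [star_mul', star_neg, star_sub, star_inv₀]
  have hSv : ∑ l, star (v l) * v l = Q * (star un * un)⁻¹ := by
    have h1 : ∀ l : Fin (m + 1), star (v l) * v l
        = (du (Fin.castSucc (Fin.succ l)) * star (du (Fin.castSucc (Fin.succ l))))
            * (star un * un)⁻¹ := by
      intro l
      simp only [hvdef, div_eq_mul_inv, star_mul', star_neg, star_inv₀, mul_inv]
      ring
    rw [Finset.sum_congr rfl fun l _ => h1 l, ← Finset.sum_mul, ← hQdef]
  have hSvw : ∑ l, star (v l) * w l
      = -(star un)⁻¹ * (-(star c0) - star ζ * star un) + star ζ * (Q * (star un * un)⁻¹) := by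
    have h1 : ∀ l, star (v l) * w l
        = star (v l) * star (z (Fin.castSucc l)) + star ζ * (star (v l) * v l) := by
      intro l; rw [hw l]; ring
    rw [Finset.sum_congr rfl fun l _ => h1 l, Finset.sum_add_distrib, ← Finset.mul_sum,
      hVZs, hSv]
  have hSwv : ∑ l, star (w l) * v l
      = -un⁻¹ * (-c0 - ζ * un) + ζ * (Q * (star un * un)⁻¹) := by
    have h1 : ∀ l, star (w l) * v l
        = z (Fin.castSucc l) * v l + ζ * (star (v l) * v l) := by
      intro l; rw [hws l]; ring
    rw [Finset.sum_congr rfl fun l _ => h1 l, Finset.sum_add_distrib, ← Finset.mul_sum,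
      hVZ, hSv]
  have hSw : ∑ l, star (w l) * w l
      = A + star ζ * (-un⁻¹ * (-c0 - ζ * un))
        + ζ * (-(star un)⁻¹ * (-(star c0) - star ζ * star un))
        + ζ * star ζ * (Q * (star un * un)⁻¹) := by
    have h1 : ∀ l, star (w l) * w l
        = z (Fin.castSucc l) * star (z (Fin.castSucc l))
          + (star ζ * (z (Fin.castSucc l) * v l)
          + (ζ * (star (v l) * star (z (Fin.castSucc l)))
          + ζ * star ζ * (star (v l) * v l))) := by
      intro l; rw [hws l, hw l]; ring
    rw [Finset.sum_congr rfl fun l _ => h1 l]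
    simp only [Finset.sum_add_distrib, ← Finset.mul_sum]
    rw [hVZ, hVZs, hSv, ← hAdef]
    ring
  -- value of Sc
  have hdd : ∀ x : ℂ, ((‖x‖ : ℝ) : ℂ) ^ 2 = x * star x := by
    intro x
    rw [← Complex.ofReal_pow, Complex.sq_norm, ← Complex.mul_conj]
    rfl
  have hSval : Sc = 1 + (A + ζ * star ζ) := by
    rw [hScdef, hSrdef]
    simp only [Complex.ofReal_add, Complex.ofReal_one, Complex.ofReal_sum, Complex.ofReal_pow]
    rw [Finset.sum_congr rfl fun i _ => hdd (z i), Fin.sum_univ_castSucc, ← hAdef, ← hζdef]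
  -- RHS conversion
  have hRHS : (((∑ i, ‖du i‖ ^ 2) /
        (‖un‖ ^ 2 * Sr ^ (m + 2) : ℝ) : ℝ) : ℂ)
      = (c0 * star c0 + Q + un * star un) / ((un * star un) * Sc ^ (m + 2)) := by
    simp only [Complex.ofReal_div, Complex.ofReal_mul, Complex.ofReal_pow, Complex.ofReal_sum]
    rw [Finset.sum_congr rfl fun i _ => hdd (du i)]
    rw [hdd un]
    rw [Fin.sum_univ_succ, Fin.sum_univ_castSucc]
    have h2 : ∀ l : Fin (m + 1),
        du (Fin.castSucc l).succ * star (du (Fin.castSucc l).succ)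
          = du (Fin.castSucc (Fin.succ l)) * star (du (Fin.castSucc (Fin.succ l))) := by
      intro l; rw [Fin.succ_castSucc]
    rw [Finset.sum_congr rfl fun l _ => h2 l, Fin.succ_last, ← hQdef, ← hundef, ← hc0def,
      ← hScdef]
    ring
  -- final computation
  rw [hMGM, det_aux, hRHS]
  have g1 : ∑ l, -(Sc⁻¹ * star (w l)) * w l = -(Sc⁻¹ * ∑ l, star (w l) * w l) := by
    rw [Finset.mul_sum, ← Finset.sum_neg_distrib]
    exact Finset.sum_congr rfl fun l _ => by ring
  have g2 : ∑ l, -(Sc⁻¹ * star (w l)) * v l = -(Sc⁻¹ * ∑ l, star (w l) * v l) := by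
    rw [Finset.mul_sum, ← Finset.sum_neg_distrib]
    exact Finset.sum_congr rfl fun l _ => by ring
  rw [g1, g2, hSv, hSvw, hSwv, hSw]
  have key := scalar_key (m + 1) Sc un (star un) c0 (star c0) ζ (star ζ) Q A
    hun hsun hScne hSval
  linear_combination key
end

section
/- Let n ≥ 2 and let Q : ℂ^{n+1} → ℂ be complex-differentiable (holomorphic) and homogeneous of degree n+1, i.e. Q(λ·Z) = λ^{n+1}·Q(Z) for all λ ∈ ℂ and Z ∈ ℂ^{n+1}. Let Z = (Z_0, …, Z_n) ∈ ℂ^{n+1} satisfy Z_0 = 1, Q(Z) = 0 and ∂Q/∂Z_n(Z) ≠ 0. Write z = (Z_1, …, Z_n), u_i = ∂Q/∂Z_i(Z), let J be the (n−1)×n complex matrix whose (j,k) entry is δ_{jk} for 1 ≤ k ≤ n−1 and −u_j/u_n for k = n, and let G(z) be the n×n Hermitian matrix with entries G(z)_{jk} = δ_{jk}/(1+‖z‖²) − (conj(z_j)·z_k)/(1+‖z‖²)². Define the integration weight w = (1/|u_n|²) / det(J · G(z) · J*). Then w = ‖Z‖^{2n} / ‖∇Q(Z)‖², where ‖Z‖²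 = ∑_{i=0}^n |Z_i|² and ‖∇Q(Z)‖² = ∑_{i=0}^n |∂Q/∂Z_i(Z)|². -/
set_option maxHeartbeats 1000000
open Complex Finset

lemma iw_sum_ite_two {n : ℕ} (c1 c2 : Fin n) (h : c1 ≠ c2) (t : ℂ) (X : Fin n → ℂ) :
    ∑ p, (if p = c1 then 1 else if p = c2 then t else 0) * X p = X c1 + t * X c2 := by
  have key : ∀ p, (if p = c1 then (1:ℂ) else if p = c2 then t else 0) * X p
      = (if p = c1 then X c1 else 0) + (if p = c2 then t * X c2 else 0) := by
    intro p
    by_cases h1 : p = c1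
    · subst h1; simp [h]
    · by_cases h2 : p = c2 <;> simp [h1, h2, Ne.symm h]
  simp only [key, Finset.sum_add_distrib, Finset.sum_ite_eq', Finset.mem_univ, if_true]


lemma iw_euler {m : ℕ} (Q : (Fin (m + 3) → ℂ) → ℂ)
    (hdiff : Differentiable ℂ Q)
    (hhom : ∀ (c : ℂ) (W : Fin (m + 3) → ℂ), Q (c • W) = c ^ (m + 3) * Q W)
    (Z : Fin (m + 3) → ℂ) (hZQ : Q Z = 0)
    (du : Fin (m + 3) → ℂ)
    (hdu : ∀ i, du i = fderiv ℂ Q Z (Pi.single i 1)) :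
    ∑ i, Z i * du i = 0 := by
  have hg : HasDerivAt (fun c : ℂ => c • Z) Z 1 := by
    simpa using (hasDerivAt_id (1:ℂ)).smul_const Z
  have hQ : HasFDerivAt Q (fderiv ℂ Q Z) ((1:ℂ) • Z) := by
    simpa using (hdiff Z).hasFDerivAt
  have hcomp : HasDerivAt (fun c : ℂ => Q (c • Z)) (fderiv ℂ Q Z Z) 1 :=
    hQ.comp_hasDerivAt 1 hg
  have hzero' : (fun c : ℂ => Q (c • Z)) = fun _ => (0:ℂ) := by
    funext c; rw [hhom, hZQ, mul_zero]
  rw [hzero'] at hcomp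
  have h0 : fderiv ℂ Q Z Z = 0 := hcomp.unique (hasDerivAt_const 1 0)
  have hZsum : Z = ∑ i, Z i • (Pi.single i (1:ℂ) : Fin (m+3) → ℂ) := by
    funext k
    rw [Finset.sum_apply]
    simp [Pi.single_apply, eq_comm]
  set f := fderiv ℂ Q Z with hf
  calc ∑ i, Z i * du i = f (∑ i, Z i • (Pi.single i (1:ℂ) : Fin (m+3) → ℂ)) := by
        rw [map_sum]; simp [hdu, smul_eq_mul]
    _ = f Z := by rw [← hZsum]
    _ = 0 := h0

lemma iw_abs_sq (x : ℂ) : ((‖x‖ ^ 2 : ℝ) : ℂ) = x * starRingEnd ℂ x := by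
  rw [Complex.sq_norm]; exact (Complex.mul_conj x).symm

/-- Integration Weights Identity, Theorem 3.3. With `n = m + 2 ≥ 2`,
`Q : ℂ^{n+1} → ℂ` holomorphic and homogeneous of degree `n+1`, at a point `Z` with
`Z_0 = 1`, `Q Z = 0`, `∂Q/∂Z_n (Z) ≠ 0`, the integration weight
`w = (1/|u_n|²) / det (J ⬝ G ⬝ Jᴴ)` equals `‖Z‖^{2n} / ‖∇Q(Z)‖²`. -/
theorem integration_weights_identity
    (m : ℕ) (Q : (Fin (m + 3) → ℂ) → ℂ)
    (hdiff : Differentiable ℂ Q)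
    (hhom : ∀ (c : ℂ) (W : Fin (m + 3) → ℂ), Q (c • W) = c ^ (m + 3) * Q W)
    (Z : Fin (m + 3) → ℂ) (hZ0 : Z 0 = 1) (hZQ : Q Z = 0)
    (du : Fin (m + 3) → ℂ)
    (hdu : ∀ i, du i = fderiv ℂ Q Z (Pi.single i 1))
    (hun : du (Fin.last (m + 2)) ≠ 0)
    (z : Fin (m + 2) → ℂ) (hz : ∀ i : Fin (m + 2), z i = Z i.succ)
    (J : Matrix (Fin (m + 1)) (Fin (m + 2)) ℂ)
    (hJ : ∀ (j : Fin (m + 1)) (k : Fin (m + 2)),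
      J j k =
        if k = Fin.castSucc j then 1
        else if k = Fin.last (m + 1) then
          -du (Fin.castSucc (Fin.succ j)) / du (Fin.last (m + 2))
        else 0)
    (G : Matrix (Fin (m + 2)) (Fin (m + 2)) ℂ)
    (hG : ∀ (j k : Fin (m + 2)),
      G j k =
        (if j = k then 1 else 0) / ((1 + ∑ i, ‖z i‖ ^ 2 : ℝ) : ℂ)
          - starRingEnd ℂ (z j) * z k / (((1 + ∑ i, ‖z i‖ ^ 2 : ℝ) : ℂ)) ^ 2)
    (w : ℂ)
    (hw : w = (1 / ((‖du (Fin.last (m + 2))‖ ^ 2 : ℝ) : ℂ)) /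
      (J * G * J.conjTranspose).det) :
    w = (((∑ i, ‖Z i‖ ^ 2) ^ (m + 2) /
      (∑ i, ‖du i‖ ^ 2) : ℝ) : ℂ) := by
  have euler : ∑ i, Z i * du i = 0 := iw_euler Q hdiff hhom Z hZQ du hdu
  set c : ℂ := du (Fin.last (m + 2)) with hcdef
  set N : ℂ := ((1 + ∑ i, ‖z i‖ ^ 2 : ℝ) : ℂ) with hN
  have hNrpos : (0 : ℝ) < 1 + ∑ i, ‖z i‖ ^ 2 := by positivity
  have hN0 : N ≠ 0 := by
    rw [hN]; exact Complex.ofReal_ne_zero.mpr hNrpos.ne'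
  have hcc : starRingEnd ℂ c ≠ 0 := by simpa using hun
  set v : Fin (m + 1) → ℂ := fun j => -du (Fin.castSucc (Fin.succ j)) / c with hv
  set zl : ℂ := z (Fin.last (m + 1)) with hzl
  set a : Fin (m + 1) → ℂ := fun j => starRingEnd ℂ (z (Fin.castSucc j)) + v j * starRingEnd ℂ zl with ha
  set ab : Fin (m + 1) → ℂ := fun j => z (Fin.castSucc j) + starRingEnd ℂ (v j) * zl with hab
  set U : Matrix (Fin (m + 1)) (Fin 2) ℂ := Matrix.of (fun j i => if i = 0 then v j else a j) with hU
  set V : Matrix (Fin 2) (Fin (m + 1)) ℂ := Matrix.of (fun i k => if i = 0 then starRingEnd ℂ (v k) else -N⁻¹ * ab k) with hV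
  have hJrow : ∀ (X : Fin (m+2) → ℂ) (j : Fin (m+1)),
      ∑ p, J j p * X p = X (Fin.castSucc j) + v j * X (Fin.last (m+1)) := by
    intro X j
    have e : ∀ p, J j p * X p =
        (if p = Fin.castSucc j then 1 else if p = Fin.last (m+1) then v j else 0) * X p := by
      intro p; rw [hJ]
    rw [Finset.sum_congr rfl (fun p _ => e p)]
    exact iw_sum_ite_two _ _ (Fin.castSucc_lt_last j).ne (v j) X
  have hJrowc : ∀ (X : Fin (m+2) → ℂ) (k : Fin (m+1)),
      ∑ q, X q * starRingEnd ℂ (J k q)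
        = X (Fin.castSucc k) + starRingEnd ℂ (v k) * X (Fin.last (m+1)) := by
    intro X k
    have e : ∀ q, X q * starRingEnd ℂ (J k q) =
        (if q = Fin.castSucc k then 1 else if q = Fin.last (m+1) then starRingEnd ℂ (v k) else 0) * X q := by
      intro q
      rw [hJ, mul_comm]
      split_ifs <;> simp [hv]
    rw [Finset.sum_congr rfl (fun q _ => e q)]
    exact iw_sum_ite_two _ _ (Fin.castSucc_lt_last k).ne _ X
  have hkey : J * G * J.conjTranspose = N⁻¹ • (1 + U * V) := by
    rw [Matrix.mul_assoc]
    ext j k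
    have hinner : ∀ p, (G * J.conjTranspose) p k
        = G p (Fin.castSucc k) + starRingEnd ℂ (v k) * G p (Fin.last (m+1)) := by
      intro p
      rw [Matrix.mul_apply]
      exact hJrowc (fun q => G p q) k
    calc (J * (G * J.conjTranspose)) j k
        = ∑ p, J j p * (G p (Fin.castSucc k) + starRingEnd ℂ (v k) * G p (Fin.last (m+1))) := by
          rw [Matrix.mul_apply]
          exact Finset.sum_congr rfl fun p _ => by rw [hinner]
      _ = (G (Fin.castSucc j) (Fin.castSucc k) + starRingEnd ℂ (v k) * G (Fin.castSucc j) (Fin.last (m+1)))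
            + v j * (G (Fin.last (m+1)) (Fin.castSucc k) + starRingEnd ℂ (v k) * G (Fin.last (m+1)) (Fin.last (m+1))) :=
          hJrow _ j
      _ = (N⁻¹ • (1 + U * V) : Matrix (Fin (m+1)) (Fin (m+1)) ℂ) j k := by
          simp only [Matrix.smul_apply, Matrix.add_apply, Matrix.one_apply, Matrix.mul_apply,
            Fin.sum_univ_two, hU, hV, Matrix.of_apply]
          rw [hG, hG, hG, hG]
          simp only [← hN, ha, hab, ← hzl]
          norm_num [Fin.castSucc_inj, smul_eq_mul, (Fin.castSucc_lt_last j).ne,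
            (Fin.castSucc_lt_last k).ne, Ne.symm (Fin.castSucc_lt_last j).ne,
            Ne.symm (Fin.castSucc_lt_last k).ne, map_neg, map_mul]
          by_cases hjk : j = k
          · subst hjk
            simp only [if_pos rfl]
            field_simp [hN0, hun]
            ring
          · simp only [if_neg hjk]
            field_simp [hN0, hun]
            ring
  -- scalar abbreviations
  set P : ℂ := ∑ j, starRingEnd ℂ (v j) * v j with hP
  set τ : ℂ := ∑ j, v j * z (Fin.castSucc j) with hτ
  set τc : ℂ := ∑ j, starRingEnd ℂ (v j) * starRingEnd ℂ (z (Fin.castSucc j)) with hτc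
  set Qs : ℂ := ∑ j, z (Fin.castSucc j) * starRingEnd ℂ (z (Fin.castSucc j)) with hQs
  set Kc : ℂ := c * starRingEnd ℂ c with hKc
  set S : ℂ := ((∑ i, ‖du i‖ ^ 2 : ℝ) : ℂ) with hS
  have hKc0 : Kc ≠ 0 := mul_ne_zero hun hcc
  -- 2x2 determinant entries
  have e00 : (1 + V * U : Matrix (Fin 2) (Fin 2) ℂ) 0 0 = 1 + P := by
    simp only [Matrix.add_apply, Matrix.one_apply_eq, Matrix.mul_apply, hU, hV,
      Matrix.of_apply, if_pos rfl, hP]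
    norm_num
  have e01 : (1 + V * U : Matrix (Fin 2) (Fin 2) ℂ) 0 1 = ∑ j, starRingEnd ℂ (v j) * a j := by
    simp only [Matrix.add_apply, Matrix.mul_apply, hU, hV, Matrix.of_apply]
    rw [Matrix.one_apply_ne (by decide)]
    norm_num
  have e10 : (1 + V * U : Matrix (Fin 2) (Fin 2) ℂ) 1 0 = -N⁻¹ * ∑ j, ab j * v j := by
    simp only [Matrix.add_apply, Matrix.mul_apply, hU, hV, Matrix.of_apply]
    rw [Matrix.one_apply_ne (by decide)]
    norm_num [mul_assoc, Finset.mul_sum]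
  have e11 : (1 + V * U : Matrix (Fin 2) (Fin 2) ℂ) 1 1 = 1 + -N⁻¹ * ∑ j, ab j * a j := by
    simp only [Matrix.add_apply, Matrix.one_apply_eq, Matrix.mul_apply, hU, hV, Matrix.of_apply]
    norm_num [mul_assoc, Finset.mul_sum]
  have hdet2 : (1 + V * U).det
      = (1 + P) * (1 + -N⁻¹ * (∑ j, ab j * a j))
        - (∑ j, starRingEnd ℂ (v j) * a j) * (-N⁻¹ * (∑ j, ab j * v j)) := by
    rw [Matrix.det_fin_two, e00, e01, e10, e11]
  -- sum expansions
  have hip : (∑ j, starRingEnd ℂ (v j) * a j) = τc + P * starRingEnd ℂ zl := by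
    have e : ∀ j, starRingEnd ℂ (v j) * a j
        = starRingEnd ℂ (v j) * starRingEnd ℂ (z (Fin.castSucc j))
          + (starRingEnd ℂ (v j) * v j) * starRingEnd ℂ zl := by
      intro j; simp only [ha]; ring
    rw [Finset.sum_congr rfl fun j _ => e j, Finset.sum_add_distrib, ← Finset.sum_mul, ← hτc, ← hP]
  have hipc : (∑ j, ab j * v j) = τ + P * zl := by
    have e : ∀ j, ab j * v j
        = v j * z (Fin.castSucc j) + (starRingEnd ℂ (v j) * v j) * zl := by
      intro j; simp only [hab]; ring
    rw [Finset.sum_congr rfl fun j _ => e j, Finset.sum_add_distrib, ← Finset.sum_mul, ← hτ, ← hP]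
  have hE : (∑ j, ab j * a j)
      = Qs + τ * starRingEnd ℂ zl + τc * zl + P * (zl * starRingEnd ℂ zl) := by
    have e : ∀ j, ab j * a j
        = z (Fin.castSucc j) * starRingEnd ℂ (z (Fin.castSucc j))
          + (v j * z (Fin.castSucc j)) * starRingEnd ℂ zl
          + (starRingEnd ℂ (v j) * starRingEnd ℂ (z (Fin.castSucc j))) * zl
          + (starRingEnd ℂ (v j) * v j) * (zl * starRingEnd ℂ zl) := by
      intro j; simp only [ha, hab]; ring
    rw [Finset.sum_congr rfl fun j _ => e j, Finset.sum_add_distrib, Finset.sum_add_distrib,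
      Finset.sum_add_distrib, ← Finset.sum_mul, ← Finset.sum_mul, ← Finset.sum_mul,
      ← hQs, ← hτ, ← hτc, ← hP]
  -- N in terms of sums
  have hNQ : N = 1 + Qs + zl * starRingEnd ℂ zl := by
    rw [hN, Complex.ofReal_add, Complex.ofReal_one, Complex.ofReal_sum]
    simp only [iw_abs_sq]
    rw [Fin.sum_univ_castSucc, hQs, hzl]
    ring
  have hN0' : (1 : ℂ) + Qs + zl * starRingEnd ℂ zl ≠ 0 := hNQ ▸ hN0
  -- Euler consequences
  have hvd : ∀ j : Fin (m+1), du (Fin.castSucc (Fin.succ j)) = -(v j) * c := by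
    intro j; rw [hv]; field_simp
  have e2 : ∑ j, z (Fin.castSucc j) * (-(v j) * c) = -(τ * c) := by
    rw [hτ, Finset.sum_mul, ← Finset.sum_neg_distrib]
    exact Finset.sum_congr rfl fun j _ => by ring
  have e1 : ∑ i, Z i * du i = du 0 + (-(τ * c) + zl * c) := by
    rw [Fin.sum_univ_succ, Fin.sum_univ_castSucc, hZ0, one_mul, ← e2]
    congr 1
    congr 1
    · exact Finset.sum_congr rfl fun j _ => by
        rw [← hz, Fin.succ_castSucc, hvd]
    · rw [hzl, hz, Fin.succ_last, hcdef]
  rw [e1] at euler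
  have hτval : τ = du 0 / c + zl := by
    field_simp
    linear_combination -euler
  have hτcval : τc = starRingEnd ℂ (du 0) / starRingEnd ℂ c + starRingEnd ℂ zl := by
    have hconj : starRingEnd ℂ τ = τc := by
      rw [hτ, map_sum, hτc]
      exact Finset.sum_congr rfl fun j _ => map_mul _ _ _
    rw [← hconj, hτval, map_add, map_div₀]
  -- S in terms of P
  have hSval : S = du 0 * starRingEnd ℂ (du 0) + P * Kc + Kc := by
    rw [hS, Complex.ofReal_sum]
    simp only [iw_abs_sq]
    rw [Fin.sum_univ_succ, Fin.sum_univ_castSucc]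
    have em : ∑ j : Fin (m+1), du ((Fin.castSucc j).succ) * starRingEnd ℂ (du ((Fin.castSucc j).succ))
        = P * Kc := by
      rw [hP, hKc, Finset.sum_mul]
      refine Finset.sum_congr rfl fun j _ => ?_
      rw [Fin.succ_castSucc, hvd]
      simp only [map_neg, map_mul]
      ring
    rw [em, Fin.succ_last, ← hcdef, ← hKc]
    ring
  -- final determinant value
  have hcore : (1 + P) * (1 + -N⁻¹ * (∑ j, ab j * a j))
        - (∑ j, starRingEnd ℂ (v j) * a j) * (-N⁻¹ * (∑ j, ab j * v j))
      = S / (Kc * N) := by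
    rw [eq_div_iff (mul_ne_zero hKc0 hN0), hip, hipc, hE]
    have expand : ((1 + P) * (1 + -N⁻¹ * (Qs + τ * starRingEnd ℂ zl + τc * zl + P * (zl * starRingEnd ℂ zl)))
          - (τc + P * starRingEnd ℂ zl) * (-N⁻¹ * (τ + P * zl))) * (Kc * N)
        = (N * (1 + P) - (1 + P) * (Qs + τ * starRingEnd ℂ zl + τc * zl + P * (zl * starRingEnd ℂ zl))
            + (τc + P * starRingEnd ℂ zl) * (τ + P * zl)) * Kc := by
      field_simp
      ring
    rw [expand, hNQ, hτval, hτcval, hSval, hKc]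
    field_simp
    ring
  have hdetval : (J * G * J.conjTranspose).det = S / (Kc * N ^ (m + 2)) := by
    rw [hkey, Matrix.det_smul, Fintype.card_fin, Matrix.det_one_add_mul_comm, hdet2, hcore,
      eq_div_iff (mul_ne_zero hKc0 (pow_ne_zero _ hN0)), inv_pow]
    field_simp
    ring
  -- numerator identity
  have hZsum : ((∑ i, ‖Z i‖ ^ 2 : ℝ) : ℂ) = N := by
    rw [hN]
    congr 1
    rw [Fin.sum_univ_succ, hZ0]
    simp [hz]
  have hS0 : S ≠ 0 := by
    rw [hS]
    refine Complex.ofReal_ne_zero.mpr (ne_of_gt ?_)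
    refine Finset.sum_pos' (fun i _ => by positivity) ⟨Fin.last (m+2), Finset.mem_univ _, ?_⟩
    have := norm_pos_iff.mpr hun
    positivity
  rw [hw, hdetval, iw_abs_sq, ← hKc, Complex.ofReal_div, Complex.ofReal_pow, hZsum, ← hS]
  field_simp [hS0, hKc0, hN0]
end

section
/- Let V = {(z₁, z₂) ∈ ℂ² : 1 + z₁³ + z₂³ = 0}. Suppose f : ℂ² → ℝ satisfies: (i) for all (z₁, z₂) ∈ V and all ω₁, ω₂ ∈ ℂ with ω₁³ = 1 and ω₂³ = 1, f(ω₁·z₁, ω₂·z₂) = f(z₁, z₂); and (ii) for all (z₁, z₂) ∈ V, f(conj(z₁), conj(z₂)) = f(z₁, z₂). Then there exists g : ℝ × ℝ → ℝ such that f(z₁, z₂) = g(|z₁|, |z₂|) for all (z₁, z₂) ∈ V. -/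
lemma cube_root_rel {z w : ℂ} (h : w ^ 3 = z ^ 3) :
    ∃ ω : ℂ, ω ^ 3 = 1 ∧ w = ω * z := by
  by_cases hz : z = 0
  · subst hz
    simp only [zero_pow, ne_eq, OfNat.ofNat_ne_zero, not_false_eq_true,
      pow_eq_zero_iff] at h
    exact ⟨1, one_pow 3, by simp [h]⟩
  · refine ⟨w / z, ?_, by field_simp⟩
    rw [div_pow, h, div_self (pow_ne_zero 3 hz)]

lemma circle_inter {a a' : ℂ} (h1 : ‖a‖ = ‖a'‖)
    (h2 : ‖1 + a‖ = ‖1 + a'‖) :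
    a' = a ∨ a' = starRingEnd ℂ a := by
  have e1 : Complex.normSq a = Complex.normSq a' := by
    rw [← Complex.sq_norm, ← Complex.sq_norm, h1]
  have e2 : Complex.normSq (1 + a) = Complex.normSq (1 + a') := by
    rw [← Complex.sq_norm, ← Complex.sq_norm, h2]
  simp only [Complex.normSq_apply, Complex.add_re, Complex.add_im, Complex.one_re,
    Complex.one_im] at e1 e2
  have hre : a.re = a'.re := by nlinarith
  have him : a.im = a'.im ∨ a.im = -a'.im := by
    have : a.im ^ 2 = a'.im ^ 2 := by nlinarith
    have h := sq_eq_sq_iff_eq_or_eq_neg.mp this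
    tauto
  rcases him with h | h
  · left; exact Complex.ext hre.symm h.symm
  · right
    refine Complex.ext ?_ ?_
    · simpa using hre.symm
    · simp [Complex.conj_im]; linarith

/-- Proposition 4.2, case `d = 1`. On the Fermat torus
`V = {(z₁, z₂) : 1 + z₁³ + z₂³ = 0}`, a real-valued function invariant under the toric
`ℤ₃²` action and under complex conjugation depends only on `|z₁|` and `|z₂|`. -/
theorem torus_symmetric_function_of_abs
    (f : ℂ × ℂ → ℝ)
    (htoric : ∀ z₁ z₂ : ℂ, 1 + z₁ ^ 3 + z₂ ^ 3 = 0 →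
      ∀ ω₁ ω₂ : ℂ, ω₁ ^ 3 = 1 → ω₂ ^ 3 = 1 →
        f (ω₁ * z₁, ω₂ * z₂) = f (z₁, z₂))
    (hconj : ∀ z₁ z₂ : ℂ, 1 + z₁ ^ 3 + z₂ ^ 3 = 0 →
      f (starRingEnd ℂ z₁, starRingEnd ℂ z₂) = f (z₁, z₂)) :
    ∃ g : ℝ × ℝ → ℝ, ∀ z₁ z₂ : ℂ, 1 + z₁ ^ 3 + z₂ ^ 3 = 0 →
      f (z₁, z₂) = g (‖z₁‖, ‖z₂‖) := by
  -- key: f is constant on abs-fibers of V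
  have key : ∀ z₁ z₂ w₁ w₂ : ℂ, 1 + z₁ ^ 3 + z₂ ^ 3 = 0 → 1 + w₁ ^ 3 + w₂ ^ 3 = 0 →
      ‖z₁‖ = ‖w₁‖ → ‖z₂‖ = ‖w₂‖ →
      f (w₁, w₂) = f (z₁, z₂) := by
    intro z₁ z₂ w₁ w₂ hz hw h1 h2
    have ha : ‖z₁ ^ 3‖ = ‖w₁ ^ 3‖ := by
      rw [norm_pow, norm_pow, h1]
    have hb : ‖1 + z₁ ^ 3‖ = ‖1 + w₁ ^ 3‖ := by
      have ez : 1 + z₁ ^ 3 = -(z₂ ^ 3) := by linear_combination hz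
      have ew : 1 + w₁ ^ 3 = -(w₂ ^ 3) := by linear_combination hw
      rw [ez, ew, norm_neg, norm_neg, norm_pow, norm_pow, h2]
    rcases circle_inter ha hb with h | h
    · -- w₁³ = z₁³, w₂³ = z₂³
      have h2' : w₂ ^ 3 = z₂ ^ 3 := by linear_combination hw - hz - h
      obtain ⟨ω₁, hω₁, e₁⟩ := cube_root_rel h
      obtain ⟨ω₂, hω₂, e₂⟩ := cube_root_rel h2'
      rw [e₁, e₂]
      exact htoric z₁ z₂ hz ω₁ ω₂ hω₁ hω₂
    · -- w₁³ = conj z₁³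
      have hc1 : w₁ ^ 3 = (starRingEnd ℂ z₁) ^ 3 := by
        rw [← map_pow]; exact h
      have hc2 : w₂ ^ 3 = (starRingEnd ℂ z₂) ^ 3 := by
        rw [← map_pow]
        have : starRingEnd ℂ (z₂ ^ 3) = -1 - starRingEnd ℂ (z₁ ^ 3) := by
          have : starRingEnd ℂ (1 + z₁ ^ 3 + z₂ ^ 3) = 0 := by rw [hz, map_zero]
          simp only [map_add, map_one] at this
          linear_combination this
        rw [this, ← h]
        linear_combination hw
      have hzc : 1 + (starRingEnd ℂ z₁) ^ 3 + (starRingEnd ℂ z₂) ^ 3 = 0 := by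
        rw [← map_pow, ← map_pow, ← map_one (starRingEnd ℂ), ← map_add, ← map_add, hz,
          map_zero]
      obtain ⟨ω₁, hω₁, e₁⟩ := cube_root_rel hc1
      obtain ⟨ω₂, hω₂, e₂⟩ := cube_root_rel hc2
      rw [e₁, e₂]
      rw [htoric _ _ hzc ω₁ ω₂ hω₁ hω₂]
      exact hconj z₁ z₂ hz
  classical
  refine ⟨fun r => if h : ∃ p : ℂ × ℂ, 1 + p.1 ^ 3 + p.2 ^ 3 = 0 ∧
      ‖p.1‖ = r.1 ∧ ‖p.2‖ = r.2 then f h.choose else 0, ?_⟩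
  intro z₁ z₂ hz
  have hex : ∃ p : ℂ × ℂ, 1 + p.1 ^ 3 + p.2 ^ 3 = 0 ∧
      ‖p.1‖ = ‖z₁‖ ∧ ‖p.2‖ = ‖z₂‖ :=
    ⟨(z₁, z₂), hz, rfl, rfl⟩
  simp only [dif_pos hex]
  obtain ⟨hp, ha1, ha2⟩ := hex.choose_spec
  exact (key z₁ z₂ hex.choose.1 hex.choose.2 hz hp ha1.symm ha2.symm).symm
end

section
/- Let n ≥ 3 and let V = {z ∈ ℂ^n : 1 + ∑_{i=1}^n z_i^{n+1} = 0}. Then there exists a function f : ℂ^n → ℝ such that: (i) for all z ∈ V and all ω₁, …, ω_n ∈ ℂ with ω_i^{n+1} = 1 for every i, f(ω₁·z₁, …, ω_n·z_n) = f(z₁, …, z_n); (ii) for all z ∈ V, f(conj(z₁), …, conj(z_n)) = f(z₁, …, z_n); and yet (iii) there is no function g : ℝ^n → ℝ with f(z₁, …, z_n) = g(|z₁|, …, |z_n|) for all z ∈ V. -/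
open Complex Finset

lemma sum3_aux {n : ℕ} (hn : 3 ≤ n) (v : Fin n → ℂ)
    (hv : ∀ i : Fin n, 2 < (i : ℕ) → v i = 0) :
    ∑ i, v i = v ⟨0, by omega⟩ + v ⟨1, by omega⟩ + v ⟨2, by omega⟩ := by
  have h := Finset.sum_subset
    (Finset.subset_univ ({⟨0, by omega⟩, ⟨1, by omega⟩, ⟨2, by omega⟩} : Finset (Fin n)))
    (fun x _ hx => by
      apply hv
      simp only [Finset.mem_insert, Finset.mem_singleton] at hx
      push_neg at hx
      obtain ⟨h0, h1, h2⟩ := hx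
      rcases Nat.lt_or_ge (x : ℕ) 3 with h | h
      · interval_cases hxx : (x : ℕ)
        · exact absurd (Fin.ext hxx) h0
        · exact absurd (Fin.ext hxx) h1
        · exact absurd (Fin.ext hxx) h2
      · omega)
  rw [← h]
  rw [Finset.sum_insert (by simp [Fin.ext_iff]), Finset.sum_insert (by simp [Fin.ext_iff]),
    Finset.sum_singleton, add_assoc]

lemma abs_eq_one_of_pow {k : ℕ} (hk : k ≠ 0) {p w : ℂ} (hp : p ^ k = w)
    (hw : ‖w‖ = 1) : ‖p‖ = 1 := by
  have h : ‖p‖ ^ k = 1 ^ k := by rw [← norm_pow, hp, hw, one_pow]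
  exact (pow_left_inj₀ (norm_nonneg p) zero_le_one hk).mp h

/-- Proposition 4.2, case `d > 1`. On the affine Fermat hypersurface
`V = {z ∈ ℂⁿ : 1 + ∑ z_i^{n+1} = 0}` with `n ≥ 3`, there is a real-valued function on `ℂⁿ`
invariant (on `V`) under the toric action by `(n+1)`-th roots of unity and under complex
conjugation, which nevertheless is not a function of the coordinate absolute values on `V`. -/
theorem exists_symmetric_not_function_of_abs
    (n : ℕ) (hn : 3 ≤ n) :
    ∃ f : (Fin n → ℂ) → ℝ,
      (∀ z : Fin n → ℂ, 1 + ∑ i, z i ^ (n + 1) = 0 →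
        ∀ ω : Fin n → ℂ, (∀ i, ω i ^ (n + 1) = 1) →
          f (fun i => ω i * z i) = f z) ∧
      (∀ z : Fin n → ℂ, 1 + ∑ i, z i ^ (n + 1) = 0 →
        f (fun i => starRingEnd ℂ (z i)) = f z) ∧
      ¬ ∃ g : (Fin n → ℝ) → ℝ, ∀ z : Fin n → ℂ, 1 + ∑ i, z i ^ (n + 1) = 0 →
        f z = g (fun i => ‖z i‖) := by
  have hk : n + 1 ≠ 0 := Nat.succ_ne_zero n
  have h0n : 0 < n := by omega
  refine ⟨fun z => (z ⟨0, h0n⟩ ^ (n + 1)).re / ‖z ⟨0, h0n⟩‖ ^ (n + 1), ?_, ?_, ?_⟩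
  · intro z _ ω hω
    have h1 : (ω ⟨0, h0n⟩ * z ⟨0, h0n⟩) ^ (n + 1) = z ⟨0, h0n⟩ ^ (n + 1) := by
      rw [mul_pow, hω _, one_mul]
    have h2 : ‖ω ⟨0, h0n⟩‖ = 1 := abs_eq_one_of_pow hk (hω _) (by simp)
    simp only [h1, norm_mul, h2, one_mul]
  · intro z _
    show (((starRingEnd ℂ) (z ⟨0, h0n⟩)) ^ (n + 1)).re
        / ‖(starRingEnd ℂ) (z ⟨0, h0n⟩)‖ ^ (n + 1) = _
    rw [← map_pow, Complex.conj_re, Complex.norm_conj]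
  · rintro ⟨g, hg⟩
    obtain ⟨p1, hp1⟩ := Complex.isAlgClosed.exists_pow_nat_eq (-1 : ℂ) (Nat.pos_of_ne_zero hk)
    obtain ⟨q1, hq1⟩ := Complex.isAlgClosed.exists_pow_nat_eq (Complex.I) (Nat.pos_of_ne_zero hk)
    obtain ⟨q2, hq2⟩ := Complex.isAlgClosed.exists_pow_nat_eq (-Complex.I) (Nat.pos_of_ne_zero hk)
    have habs_p1 : ‖p1‖ = 1 := abs_eq_one_of_pow hk hp1 (by simp)
    have habs_q1 : ‖q1‖ = 1 := abs_eq_one_of_pow hk hq1 (by simp)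
    have habs_q2 : ‖q2‖ = 1 := abs_eq_one_of_pow hk hq2 (by simp)
    let P : Fin n → ℂ := fun i => if (i : ℕ) = 0 then 1 else if (i : ℕ) = 1 then p1
      else if (i : ℕ) = 2 then p1 else 0
    let Q : Fin n → ℂ := fun i => if (i : ℕ) = 0 then p1 else if (i : ℕ) = 1 then q1
      else if (i : ℕ) = 2 then q2 else 0
    have hPsum := sum3_aux hn (fun i => P i ^ (n + 1)) (fun i hi => by
      show P i ^ (n + 1) = 0
      show (if (i : ℕ) = 0 then (1:ℂ) else if (i : ℕ) = 1 then p1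
        else if (i : ℕ) = 2 then p1 else 0) ^ (n + 1) = 0
      rw [if_neg (by omega), if_neg (by omega), if_neg (by omega)]
      exact zero_pow hk)
    have hQsum := sum3_aux hn (fun i => Q i ^ (n + 1)) (fun i hi => by
      show (if (i : ℕ) = 0 then p1 else if (i : ℕ) = 1 then q1
        else if (i : ℕ) = 2 then q2 else 0) ^ (n + 1) = 0
      rw [if_neg (by omega), if_neg (by omega), if_neg (by omega)]
      exact zero_pow hk)
    have hPV : 1 + ∑ i, P i ^ (n + 1) = 0 := by
      rw [hPsum]
      show 1 + ((if (0:ℕ) = 0 then (1:ℂ) else if (0:ℕ) = 1 then p1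
          else if (0:ℕ) = 2 then p1 else 0) ^ (n + 1)
        + (if (1:ℕ) = 0 then (1:ℂ) else if (1:ℕ) = 1 then p1
          else if (1:ℕ) = 2 then p1 else 0) ^ (n + 1)
        + (if (2:ℕ) = 0 then (1:ℂ) else if (2:ℕ) = 1 then p1
          else if (2:ℕ) = 2 then p1 else 0) ^ (n + 1)) = 0
      norm_num [hp1]
    have hQV : 1 + ∑ i, Q i ^ (n + 1) = 0 := by
      rw [hQsum]
      show 1 + ((if (0:ℕ) = 0 then p1 else if (0:ℕ) = 1 then q1
          else if (0:ℕ) = 2 then q2 else 0) ^ (n + 1)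
        + (if (1:ℕ) = 0 then p1 else if (1:ℕ) = 1 then q1
          else if (1:ℕ) = 2 then q2 else 0) ^ (n + 1)
        + (if (2:ℕ) = 0 then p1 else if (2:ℕ) = 1 then q1
          else if (2:ℕ) = 2 then q2 else 0) ^ (n + 1)) = 0
      norm_num [hp1, hq1, hq2]
    have habs_eq : (fun i => ‖P i‖) = fun i => ‖Q i‖ := by
      funext i
      show ‖if (i : ℕ) = 0 then (1:ℂ) else if (i : ℕ) = 1 then p1
          else if (i : ℕ) = 2 then p1 else 0‖
        = ‖if (i : ℕ) = 0 then p1 else if (i : ℕ) = 1 then q1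
          else if (i : ℕ) = 2 then q2 else 0‖
      split_ifs <;> simp [habs_p1, habs_q1, habs_q2]
    have h1 := hg P hPV
    have h2 := hg Q hQV
    rw [habs_eq] at h1
    have h12 := h1.trans h2.symm
    simp only at h12
    have hP0 : P ⟨0, h0n⟩ = 1 := by
      show (if (0:ℕ) = 0 then (1:ℂ) else if (0:ℕ) = 1 then p1
        else if (0:ℕ) = 2 then p1 else 0) = 1
      norm_num
    have hQ0 : Q ⟨0, h0n⟩ = p1 := by
      show (if (0:ℕ) = 0 then p1 else if (0:ℕ) = 1 then q1
        else if (0:ℕ) = 2 then q2 else 0) = p1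
      norm_num
    rw [hP0, hQ0, hp1, habs_p1] at h12
    norm_num at h12
end

section
/- Let α > 0 be real, let n ≥ 1 and m ≥ 1 be natural numbers, and define f on the open positive orthant of ℝ^m by f(x) = (α·(n+1)/2 · ∑_{i=1}^m x_i²)^{1/(n+1)}. Then for every x ∈ ℝ^m with x_i > 0 for all i and ∑_{i=1}^m x_i = 1, one has ∑_{i=1}^m |∂f/∂x_i(x)| = α · f(x)^{−n}. In particular, f solves the functional equation α·f^{−n} = ‖∇f‖₁ on the intersection of the positive orthant with the hyperplane ∑ x_i = 1. -/
/-- Proposition 5.2, the square-root ansatz. For real `α > 0` and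
`f x = (α (n+1)/2 · ∑ x_i²)^{1/(n+1)}`, one has `∑ |∂f/∂x_i (x)| = α · f(x)⁻ⁿ`
whenever `x` lies in the positive orthant and `∑ x_i = 1`. -/
theorem sqrt_ansatz_solves_gradient_equation
    (α : ℝ) (hα : 0 < α) (n m : ℕ) (hn : 1 ≤ n) (hm : 1 ≤ m)
    (f : (Fin m → ℝ) → ℝ)
    (hf : ∀ x : Fin m → ℝ,
      f x = (α * (n + 1) / 2 * ∑ i, x i ^ 2) ^ ((1 : ℝ) / (n + 1))) :
    ∀ x : Fin m → ℝ, (∀ i, 0 < x i) → (∑ i, x i = 1) →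
      ∑ i, |fderiv ℝ f x (Pi.single i 1)| = α / f x ^ n := by
  intro x hx hsum
  set c : ℝ := α * (n + 1) / 2 with hc
  set p : ℝ := (1 : ℝ) / (n + 1) with hp
  have hn1 : (0:ℝ) < (n:ℝ) + 1 := by positivity
  have hcpos : 0 < c := by positivity
  have hSpos : 0 < ∑ i, x i ^ 2 := by
    apply Finset.sum_pos
    · intro i _; have := hx i; positivity
    · exact Finset.univ_nonempty_iff.mpr ⟨⟨0, hm⟩⟩
  set S : ℝ := ∑ i, x i ^ 2 with hS
  have hcS : 0 < c * S := mul_pos hcpos hSpos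
  -- derivative of the inner function
  have hsq : ∀ i : Fin m, HasFDerivAt (fun y : Fin m → ℝ => y i ^ 2)
      ((2 * x i) • (ContinuousLinearMap.proj i : (Fin m → ℝ) →L[ℝ] ℝ)) x := by
    intro i
    have hproj : HasFDerivAt (fun y : Fin m → ℝ => y i)
        (ContinuousLinearMap.proj i : (Fin m → ℝ) →L[ℝ] ℝ) x :=
      (ContinuousLinearMap.proj i : (Fin m → ℝ) →L[ℝ] ℝ).hasFDerivAt
    have heq : (fun y : Fin m → ℝ => y i ^ 2) = fun y => y i * y i := by
      funext y; ring
    rw [heq, two_mul, add_smul]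
    exact hproj.mul hproj
  have hsumderiv : HasFDerivAt (fun y : Fin m → ℝ => ∑ i, y i ^ 2)
      (∑ i, (2 * x i) • (ContinuousLinearMap.proj i : (Fin m → ℝ) →L[ℝ] ℝ)) x :=
    HasFDerivAt.fun_sum (fun i _ => hsq i)
  have hinner : HasFDerivAt (fun y : Fin m → ℝ => c * ∑ i, y i ^ 2)
      (c • ∑ i, (2 * x i) • (ContinuousLinearMap.proj i : (Fin m → ℝ) →L[ℝ] ℝ)) x :=
    hsumderiv.const_mul c
  have hrpow : HasDerivAt (fun t : ℝ => t ^ p) (p * (c * S) ^ (p - 1)) (c * S) :=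
    Real.hasDerivAt_rpow_const (Or.inl hcS.ne')
  have hfd : HasFDerivAt f ((p * (c * S) ^ (p - 1)) •
      (c • ∑ i, (2 * x i) • (ContinuousLinearMap.proj i : (Fin m → ℝ) →L[ℝ] ℝ))) x := by
    have : f = fun y : Fin m → ℝ => (c * ∑ i, y i ^ 2) ^ p := by
      funext y; rw [hf y]
    rw [this]
    exact hrpow.comp_hasFDerivAt x hinner
  have hap : ∀ i, fderiv ℝ f x (Pi.single i 1)
      = p * (c * S) ^ (p - 1) * (c * (2 * x i)) := by
    intro i
    rw [hfd.fderiv]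
    simp only [ContinuousLinearMap.smul_apply, ContinuousLinearMap.sum_apply,
      ContinuousLinearMap.proj_apply, smul_eq_mul]
    rw [Finset.sum_eq_single i]
    · simp
    · intro j _ hj
      simp [Pi.single_apply, hj]
    · intro h; exact absurd (Finset.mem_univ i) h
  have hcSp : 0 < (c * S) ^ (p - 1) := Real.rpow_pos_of_pos hcS _
  have hppos : 0 < p := by positivity
  have habs : ∀ i, |fderiv ℝ f x (Pi.single i 1)|
      = p * (c * S) ^ (p - 1) * (c * (2 * x i)) := by
    intro i
    rw [hap i, abs_of_pos]
    have := hx i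
    positivity
  calc ∑ i, |fderiv ℝ f x (Pi.single i 1)|
      = ∑ i, p * (c * S) ^ (p - 1) * (c * 2) * x i := by
        refine Finset.sum_congr rfl fun i _ => ?_
        rw [habs i]; ring
    _ = p * (c * S) ^ (p - 1) * (c * 2) := by
        rw [← Finset.mul_sum, hsum, mul_one]
    _ = α * (c * S) ^ (p - 1) := by
        have : p * (c * 2) = α := by
          rw [hp, hc]; field_simp
        calc p * (c * S) ^ (p - 1) * (c * 2)
            = p * (c * 2) * (c * S) ^ (p - 1) := by ring
          _ = α * (c * S) ^ (p - 1) := by rw [this]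
    _ = α / f x ^ n := by
        rw [hf x, ← hS]
        rw [← Real.rpow_natCast ((c * S) ^ p) n, ← Real.rpow_mul hcS.le]
        rw [eq_div_iff (by positivity), mul_assoc, ← Real.rpow_add hcS]
        have : p - 1 + p * n = 0 := by
          rw [hp]; field_simp; ring
        rw [this, Real.rpow_zero, mul_one]
end

section
/- Let n ≥ 2 and α ∈ ℝ. Define s₂ : ℂ^{n+1}∖{0} → ℝ by s₂(Z) = (∑_{i=0}^n |Z_i|⁴)/(∑_{i=0}^n |Z_i|²)², and F : ℂ^{n+1}∖{0} → ℝ by F(Z) = (1/π)·log(∑_{i=0}^n |Z_i|²) + α·√(s₂(Z)). Let P ∈ ℂ^{n+1} be the point with coordinates P₀ = 1, P₁ = exp(iπ/(n+1)), and P_j = 0 for 2 ≤ j ≤ n. Then for all indices j, k with 2 ≤ j, k ≤ n, the mixed Wirtinger derivative of F at P satisfies ∂_j∂̄_k F(P) = (1/(2π) − (√2/4)·α)·δ_{jk}, where ∂_jφ(z) = (1/2)·(D_{e_j}φ(z) − i·D_{i·e_j}φ(z)) and ∂̄_kφ(z) = (1/2)·(D_{e_k}φ(z) + i·D_{i·e_k}φ(z))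 with D_v the real directional derivative along v. -/
/-- The real directional derivative of `φ : ℂⁿ → ℂ` along the vector `v`, as a function. -/
noncomputable def dirDeriv {N : ℕ} (v : Fin N → ℂ) (φ : (Fin N → ℂ) → ℂ) :
    (Fin N → ℂ) → ℂ :=
  fun z => fderiv ℝ φ z v

/-- The Wirtinger derivative `∂_j φ = (1/2)(D_{e_j} φ − i D_{i e_j} φ)`. -/
noncomputable def wirtingerD {N : ℕ} (j : Fin N) (φ : (Fin N → ℂ) → ℂ) :
    (Fin N → ℂ) → ℂ :=
  fun z => (1 / 2 : ℂ) *
    (dirDeriv (Pi.single j 1) φ z - Complex.I * dirDeriv (Pi.single j Complex.I) φ z)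

/-- The conjugate Wirtinger derivative `∂̄_k φ = (1/2)(D_{e_k} φ + i D_{i e_k} φ)`. -/
noncomputable def wirtingerDBar {N : ℕ} (k : Fin N) (φ : (Fin N → ℂ) → ℂ) :
    (Fin N → ℂ) → ℂ :=
  fun z => (1 / 2 : ℂ) *
    (dirDeriv (Pi.single k 1) φ z + Complex.I * dirDeriv (Pi.single k Complex.I) φ z)

open Complex Finset



lemma aux_normSq_line (a b : ℂ) (t : ℝ) :
    Complex.normSq (a + t • b) =
      Complex.normSq a + ((2 * (a * (starRingEnd ℂ) b).re) * t + Complex.normSq b * t ^ 2) := by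
  simp [Complex.real_smul, Complex.normSq_apply, Complex.add_re, Complex.add_im,
    Complex.mul_re, Complex.mul_im, Complex.conj_re, Complex.conj_im]
  ring

lemma aux_quad (A B C x : ℝ) :
    HasDerivAt (fun t : ℝ => A + (B * t + C * t ^ 2)) (B + C * (2 * x)) x := by
  have h1 : HasDerivAt (fun t : ℝ => B * t) B x := by simpa using (hasDerivAt_id x).const_mul B
  have h2 : HasDerivAt (fun t : ℝ => C * t ^ 2) (C * (2 * x)) x := by
    simpa [mul_comm] using (hasDerivAt_pow 2 x).const_mul C
  simpa using (h1.add h2).const_add A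

lemma aux_diff_normSq : Differentiable ℝ Complex.normSq := by
  have : Complex.normSq = fun w : ℂ => w.re * w.re + w.im * w.im := funext fun w => Complex.normSq_apply w
  rw [this]
  exact (Complex.reCLM.differentiable.mul Complex.reCLM.differentiable).add
    (Complex.imCLM.differentiable.mul Complex.imCLM.differentiable)

noncomputable def uu {N : ℕ} (z : Fin N → ℂ) : ℝ := ∑ i, Complex.normSq (z i)
noncomputable def vv {N : ℕ} (z : Fin N → ℂ) : ℝ := ∑ i, (Complex.normSq (z i)) ^ 2

lemma vv_pos {N : ℕ} (z : Fin N → ℂ) (hu : 0 < uu z) : 0 < vv z := by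
  obtain ⟨i, hi⟩ : ∃ i, 0 < Complex.normSq (z i) := by
    by_contra h
    push_neg at h
    have h0 : ∀ i ∈ Finset.univ, Complex.normSq (z i) = 0 :=
      fun i _ => le_antisymm (h i) (Complex.normSq_nonneg _)
    have : uu z = 0 := Finset.sum_eq_zero h0
    linarith
  exact Finset.sum_pos' (fun i _ => sq_nonneg _) ⟨i, Finset.mem_univ i, by positivity⟩

lemma hasDerivAt_uu {N : ℕ} (z s : Fin N → ℂ) :
    HasDerivAt (fun t : ℝ => uu (z + t • s)) (∑ i, 2 * (z i * (starRingEnd ℂ) (s i)).re) 0 := by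
  have h := HasDerivAt.fun_sum (u := Finset.univ)
    (A := fun i (t : ℝ) => Complex.normSq (z i) +
        ((2 * (z i * (starRingEnd ℂ) (s i)).re) * t + Complex.normSq (s i) * t ^ 2))
    (A' := fun i => 2 * (z i * (starRingEnd ℂ) (s i)).re + Complex.normSq (s i) * (2 * 0))
    (fun i _ => aux_quad _ _ _ 0)
  have hfun : (fun t : ℝ => uu (z + t • s)) =
      (fun t : ℝ => ∑ i, (Complex.normSq (z i) +
        ((2 * (z i * (starRingEnd ℂ) (s i)).re) * t + Complex.normSq (s i) * t ^ 2))) := by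
    funext t
    simp only [uu, Pi.add_apply, Pi.smul_apply, aux_normSq_line]
  rw [hfun]
  refine h.congr_deriv ?_
  simp

lemma hasDerivAt_vv {N : ℕ} (z s : Fin N → ℂ) :
    HasDerivAt (fun t : ℝ => vv (z + t • s))
      (∑ i, 2 * Complex.normSq (z i) * (2 * (z i * (starRingEnd ℂ) (s i)).re)) 0 := by
  have h := HasDerivAt.fun_sum (u := Finset.univ)
    (A := fun i (t : ℝ) => (Complex.normSq (z i) +
        ((2 * (z i * (starRingEnd ℂ) (s i)).re) * t + Complex.normSq (s i) * t ^ 2)) ^ 2)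
    (A' := fun i => 2 * (Complex.normSq (z i) +
        ((2 * (z i * (starRingEnd ℂ) (s i)).re) * 0 + Complex.normSq (s i) * 0 ^ 2)) ^ 1 *
        (2 * (z i * (starRingEnd ℂ) (s i)).re + Complex.normSq (s i) * (2 * 0)))
    (fun i _ => (aux_quad _ _ _ 0).pow 2)
  have hfun : (fun t : ℝ => vv (z + t • s)) =
      (fun t : ℝ => ∑ i, (Complex.normSq (z i) +
        ((2 * (z i * (starRingEnd ℂ) (s i)).re) * t + Complex.normSq (s i) * t ^ 2)) ^ 2) := by
    funext t
    simp only [vv, Pi.add_apply, Pi.smul_apply, aux_normSq_line]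
  rw [hfun]
  refine h.congr_deriv ?_
  simp

noncomputable def EE {N : ℕ} (α : ℝ) (k : Fin N) (z : Fin N → ℂ) : ℝ :=
  (2 / Real.pi) / uu z
  + α * (((4 * Complex.normSq (z k) * uu z ^ 2 - vv z * (2 * uu z * 2)) / (uu z ^ 2) ^ 2)
      / (2 * Real.sqrt (vv z / uu z ^ 2)))

lemma key_line {N : ℕ} (α : ℝ) (k : Fin N) (z : Fin N → ℂ) (hu : 0 < uu z) (v₀ : ℂ) :
    HasDerivAt (fun t : ℝ => (1 / Real.pi) * Real.log (uu (z + t • (Pi.single k v₀ : Fin N → ℂ)))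
        + α * Real.sqrt (vv (z + t • (Pi.single k v₀ : Fin N → ℂ))
            / (uu (z + t • (Pi.single k v₀ : Fin N → ℂ))) ^ 2))
      ((z k * (starRingEnd ℂ) v₀).re * EE α k z) 0 := by
  set s : Fin N → ℂ := (Pi.single k v₀ : Fin N → ℂ) with hs
  have hz0 : z + (0 : ℝ) • s = z := by simp
  set ρ : ℝ := (z k * (starRingEnd ℂ) v₀).re with hρ
  have hUsum : (∑ i, 2 * (z i * (starRingEnd ℂ) (s i)).re) = 2 * ρ := by
    rw [Finset.sum_eq_single_of_mem k (Finset.mem_univ k)]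
    · simp [hs, Pi.single_eq_same, hρ]
    · intro i _ hik
      simp [hs, Pi.single_eq_of_ne hik]
  have hVsum : (∑ i, 2 * Complex.normSq (z i) * (2 * (z i * (starRingEnd ℂ) (s i)).re))
      = 2 * Complex.normSq (z k) * (2 * ρ) := by
    rw [Finset.sum_eq_single_of_mem k (Finset.mem_univ k)]
    · simp [hs, Pi.single_eq_same, hρ]
    · intro i _ hik
      simp [hs, Pi.single_eq_of_ne hik]
  have hU : HasDerivAt (fun t : ℝ => uu (z + t • s)) (2 * ρ) 0 := hUsum ▸ hasDerivAt_uu z s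
  have hV : HasDerivAt (fun t : ℝ => vv (z + t • s)) (2 * Complex.normSq (z k) * (2 * ρ)) 0 :=
    hVsum ▸ hasDerivAt_vv z s
  have hune : uu (z + (0 : ℝ) • s) ≠ 0 := by rw [hz0]; exact hu.ne'
  have hv : 0 < vv z := vv_pos z hu
  have hlog := (hU.log hune).const_mul (1 / Real.pi)
  have hQ := hV.fun_div (hU.fun_pow 2) (by rw [hz0]; exact (pow_pos hu 2).ne')
  have hsq := (hQ.sqrt (by rw [hz0]; exact (div_pos hv (pow_pos hu 2)).ne')).const_mul α
  have htot := hlog.fun_add hsq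
  rw [hz0] at htot
  refine htot.congr_deriv ?_
  unfold EE
  ring

/-- computation underlying Proposition 6.4. For
`F(Z) = (1/π) log ‖Z‖² + α √(s₂ Z)` with `s₂ Z = (∑ |Z_i|⁴)/(∑ |Z_i|²)²`, at the
pseudo-origin `P = (1, exp(iπ/(n+1)), 0, …, 0)` and indices `2 ≤ j, k ≤ n`,
`∂_j ∂̄_k F (P) = (1/(2π) − (√2/4) α) δ_{jk}`. -/
theorem mixed_wirtinger_at_pseudo_origin
    (n : ℕ) (hn : 2 ≤ n) (α : ℝ)
    (F : (Fin (n + 1) → ℂ) → ℝ)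
    (hF : ∀ Z : Fin (n + 1) → ℂ,
      F Z = (1 / Real.pi) * Real.log (∑ i, ‖Z i‖ ^ 2)
        + α * Real.sqrt ((∑ i, ‖Z i‖ ^ 4) / (∑ i, ‖Z i‖ ^ 2) ^ 2))
    (P : Fin (n + 1) → ℂ)
    (hP : ∀ i : Fin (n + 1), P i =
      if (i : ℕ) = 0 then 1
      else if (i : ℕ) = 1 then Complex.exp ((Real.pi : ℂ) * Complex.I / ((n : ℂ) + 1))
      else 0)
    (j k : Fin (n + 1)) (hj : 2 ≤ (j : ℕ)) (hk : 2 ≤ (k : ℕ)) :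
    wirtingerD j (wirtingerDBar k (fun Z => ((F Z : ℝ) : ℂ))) P =
      ((1 / (2 * Real.pi) - Real.sqrt 2 / 4 * α : ℝ) : ℂ) * (if j = k then 1 else 0) := by
  -- rewrite F in terms of uu and vv
  have habs4 : ∀ w : ℂ, ‖w‖ ^ 4 = Complex.normSq w ^ 2 := fun w => by
    rw [show (4 : ℕ) = 2 * 2 from rfl, pow_mul, Complex.sq_norm]
  have hF' : ∀ Z, F Z = (1 / Real.pi) * Real.log (uu Z) + α * Real.sqrt (vv Z / (uu Z) ^ 2) := by
    intro Z
    rw [hF Z]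
    simp only [Complex.sq_norm, habs4]
    rfl
  -- differentiability of F on the positive locus
  have hdiffuu : ∀ z : Fin (n + 1) → ℂ, DifferentiableAt ℝ uu z := by
    intro z
    exact DifferentiableAt.fun_sum fun i _ =>
      (aux_diff_normSq (z i)).comp z (ContinuousLinearMap.proj i :
        (Fin (n + 1) → ℂ) →L[ℝ] ℂ).differentiableAt
  have hdiffvv : ∀ z : Fin (n + 1) → ℂ, DifferentiableAt ℝ vv z := by
    intro z
    exact DifferentiableAt.fun_sum fun i _ =>
      ((aux_diff_normSq (z i)).comp z (ContinuousLinearMap.proj i :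
        (Fin (n + 1) → ℂ) →L[ℝ] ℂ).differentiableAt).pow 2
  have hdiffF : ∀ z : Fin (n + 1) → ℂ, 0 < uu z → DifferentiableAt ℝ F z := by
    intro z hz
    have hFe : F = fun Z => (1 / Real.pi) * Real.log (uu Z) + α * Real.sqrt (vv Z / (uu Z) ^ 2) :=
      funext hF'
    rw [hFe]
    have d1 : DifferentiableAt ℝ (fun Z => Real.log (uu Z)) z := (hdiffuu z).log hz.ne'
    have d2 : DifferentiableAt ℝ (fun Z => uu Z ^ 2) z := (hdiffuu z).pow 2
    have d3 : DifferentiableAt ℝ (fun Z => vv Z / uu Z ^ 2) z := by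
      simp only [div_eq_mul_inv]
      exact (hdiffvv z).mul (d2.inv (pow_pos hz 2).ne')
    have d4 : DifferentiableAt ℝ (fun Z => Real.sqrt (vv Z / uu Z ^ 2)) z :=
      d3.sqrt (div_pos (vv_pos z hz) (pow_pos hz 2)).ne'
    exact (d1.const_mul _).add (d4.const_mul α)
  -- directional derivative formula
  have hdir : ∀ z : Fin (n + 1) → ℂ, 0 < uu z → ∀ v₀ : ℂ,
      dirDeriv (Pi.single k v₀) (fun Z => ((F Z : ℝ) : ℂ)) z
        = (((z k * (starRingEnd ℂ) v₀).re * EE α k z : ℝ) : ℂ) := by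
    intro z hz v₀
    have hdF : DifferentiableAt ℝ F z := hdiffF z hz
    have hdFC : DifferentiableAt ℝ (fun Z => ((F Z : ℝ) : ℂ)) z :=
      Complex.ofRealCLM.differentiableAt.comp z hdF
    have hline := key_line α k z hz v₀
    have hfun : (fun t : ℝ => (1 / Real.pi)
          * Real.log (uu (z + t • (Pi.single k v₀ : Fin (n + 1) → ℂ)))
        + α * Real.sqrt (vv (z + t • (Pi.single k v₀ : Fin (n + 1) → ℂ))
            / (uu (z + t • (Pi.single k v₀ : Fin (n + 1) → ℂ))) ^ 2))
        = fun t : ℝ => F (z + t • (Pi.single k v₀ : Fin (n + 1) → ℂ)) :=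
      funext fun t => (hF' _).symm
    rw [hfun] at hline
    have hlineC : HasDerivAt
        (fun t : ℝ => ((F (z + t • (Pi.single k v₀ : Fin (n + 1) → ℂ)) : ℝ) : ℂ))
        (((z k * (starRingEnd ℂ) v₀).re * EE α k z : ℝ) : ℂ) 0 := hline.ofReal_comp
    have h1 : dirDeriv (Pi.single k v₀) (fun Z => ((F Z : ℝ) : ℂ)) z
        = lineDeriv ℝ (fun Z => ((F Z : ℝ) : ℂ)) z (Pi.single k v₀) :=
      (hdFC.lineDeriv_eq_fderiv).symm
    rw [h1]
    unfold lineDeriv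
    exact hlineC.deriv
  -- wirtingerDBar formula
  have hGeq : ∀ z : Fin (n + 1) → ℂ, 0 < uu z →
      wirtingerDBar k (fun Z => ((F Z : ℝ) : ℂ)) z
        = (1 / 2 : ℂ) * z k * ((EE α k z : ℝ) : ℂ) := by
    intro z hz
    unfold wirtingerDBar
    rw [hdir z hz 1, hdir z hz Complex.I]
    have h1 : (z k * (starRingEnd ℂ) 1).re = (z k).re := by simp
    have h2 : (z k * (starRingEnd ℂ) Complex.I).re = (z k).im := by
      simp [Complex.conj_I, Complex.mul_re]
    rw [h1, h2]
    push_cast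
    rw [show ((z k).re : ℂ) * ((EE α k z : ℝ) : ℂ)
          + Complex.I * (((z k).im : ℝ) * ((EE α k z : ℝ) : ℂ))
        = (((z k).re : ℂ) + ((z k).im : ℝ) * Complex.I) * ((EE α k z : ℝ) : ℂ) by ring,
      Complex.re_add_im]
    ring
  -- facts about P
  have hexp : ‖Complex.exp ((Real.pi : ℂ) * Complex.I / ((n : ℂ) + 1))‖ = 1 := by
    rw [show (Real.pi : ℂ) * Complex.I / ((n : ℂ) + 1)
        = ((Real.pi / (n + 1) : ℝ) : ℂ) * Complex.I by push_cast; ring]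
    exact Complex.norm_exp_ofReal_mul_I _
  have hval : ∀ i : Fin (n + 1), Complex.normSq (P i)
      = if (i : ℕ) = 0 then 1 else if (i : ℕ) = 1 then 1 else 0 := by
    intro i
    rw [hP i]
    split_ifs with h0 h1
    · simp
    · rw [Complex.normSq_eq_norm_sq, hexp]; norm_num
    · simp
  have hsum : ∑ i : Fin (n + 1),
      (if (i : ℕ) = 0 then (1 : ℝ) else if (i : ℕ) = 1 then 1 else 0) = 2 := by
    have hpt : ∀ i : Fin (n + 1),
        (if (i : ℕ) = 0 then (1 : ℝ) else if (i : ℕ) = 1 then 1 else 0)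
          = (if i = (⟨0, by omega⟩ : Fin (n + 1)) then 1 else 0)
            + (if i = (⟨1, by omega⟩ : Fin (n + 1)) then 1 else 0) := by
      intro i
      by_cases h0 : (i : ℕ) = 0 <;> by_cases h1 : (i : ℕ) = 1
      · omega
      · simp [h0, h1, Fin.ext_iff]
      · simp [h0, h1, Fin.ext_iff]
      · simp [h0, h1, Fin.ext_iff]
    rw [Finset.sum_congr rfl fun i _ => hpt i, Finset.sum_add_distrib,
      Finset.sum_ite_eq' Finset.univ (⟨0, by omega⟩ : Fin (n + 1)) (fun _ => (1 : ℝ)),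
      Finset.sum_ite_eq' Finset.univ (⟨1, by omega⟩ : Fin (n + 1)) (fun _ => (1 : ℝ))]
    norm_num
  have hPuu : uu P = 2 := by
    unfold uu
    rw [Finset.sum_congr rfl fun i _ => hval i]
    exact hsum
  have hval2 : ∀ i : Fin (n + 1), Complex.normSq (P i) ^ 2
      = if (i : ℕ) = 0 then (1 : ℝ) else if (i : ℕ) = 1 then 1 else 0 := by
    intro i
    rw [hval i]
    split_ifs <;> norm_num
  have hPvv : vv P = 2 := by
    unfold vv
    rw [Finset.sum_congr rfl fun i _ => hval2 i]
    exact hsum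
  have hPk : P k = 0 := by
    rw [hP k, if_neg (by omega), if_neg (by omega)]
  have hPupos : (0 : ℝ) < uu P := by rw [hPuu]; norm_num
  -- eventual equality near P
  have hcont : Continuous (uu (N := n + 1)) := by
    unfold uu
    exact continuous_finset_sum _ fun i _ =>
      Complex.continuous_normSq.comp (continuous_apply i)
  have hopen : IsOpen {z : Fin (n + 1) → ℂ | 0 < uu z} := isOpen_lt continuous_const hcont
  have hev : wirtingerDBar k (fun Z => ((F Z : ℝ) : ℂ))
      =ᶠ[nhds P] fun z => (1 / 2 : ℂ) * z k * ((EE α k z : ℝ) : ℂ) := by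
    filter_upwards [hopen.mem_nhds hPupos] with z hz using hGeq z hz
  -- differentiate the explicit formula at P
  have hdE : DifferentiableAt ℝ (fun z : Fin (n + 1) → ℂ => ((EE α k z : ℝ) : ℂ)) P := by
    apply Complex.ofRealCLM.differentiableAt.comp
    have hnk : DifferentiableAt ℝ (fun z : Fin (n + 1) → ℂ => Complex.normSq (z k)) P :=
      (aux_diff_normSq (P k)).comp P (ContinuousLinearMap.proj k :
        (Fin (n + 1) → ℂ) →L[ℝ] ℂ).differentiableAt
    have e1 : DifferentiableAt ℝ (fun z : Fin (n + 1) → ℂ => (2 / Real.pi) / uu z) P := by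
      simp only [div_eq_mul_inv]
      exact ((hdiffuu P).inv hPupos.ne').const_mul _
    have e2 : DifferentiableAt ℝ (fun z : Fin (n + 1) → ℂ => uu z ^ 2) P := (hdiffuu P).pow 2
    have e3 : DifferentiableAt ℝ (fun z : Fin (n + 1) → ℂ =>
        4 * Complex.normSq (z k) * uu z ^ 2 - vv z * (2 * uu z * 2)) P :=
      ((hnk.const_mul 4).mul e2).sub ((hdiffvv P).mul (((hdiffuu P).const_mul 2).mul_const 2))
    have e4 : DifferentiableAt ℝ (fun z : Fin (n + 1) → ℂ => (uu z ^ 2) ^ 2) P := e2.pow 2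
    have e4ne : ((uu P ^ 2) ^ 2 : ℝ) ≠ 0 := by positivity
    have e5 : DifferentiableAt ℝ (fun z : Fin (n + 1) → ℂ =>
        (4 * Complex.normSq (z k) * uu z ^ 2 - vv z * (2 * uu z * 2)) / (uu z ^ 2) ^ 2) P := by
      simp only [div_eq_mul_inv]
      exact e3.mul (e4.inv e4ne)
    have e6 : DifferentiableAt ℝ (fun z : Fin (n + 1) → ℂ => vv z / uu z ^ 2) P := by
      simp only [div_eq_mul_inv]
      exact (hdiffvv P).mul (e2.inv (by positivity))
    have e6pos : (0 : ℝ) < vv P / uu P ^ 2 := div_pos (vv_pos P hPupos) (pow_pos hPupos 2)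
    have e7 : DifferentiableAt ℝ (fun z : Fin (n + 1) → ℂ =>
        2 * Real.sqrt (vv z / uu z ^ 2)) P := (e6.sqrt e6pos.ne').const_mul 2
    have e7ne : (2 * Real.sqrt (vv P / uu P ^ 2) : ℝ) ≠ 0 := by positivity
    have e8 : DifferentiableAt ℝ (fun z : Fin (n + 1) → ℂ =>
        ((4 * Complex.normSq (z k) * uu z ^ 2 - vv z * (2 * uu z * 2)) / (uu z ^ 2) ^ 2)
          / (2 * Real.sqrt (vv z / uu z ^ 2))) P := by
      simp only [div_eq_mul_inv]
      exact e5.mul (e7.inv e7ne)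
    exact e1.add (e8.const_mul α)
  -- value of EE at P
  have hnkP : Complex.normSq (P k) = 0 := by rw [hPk]; simp
  have hs4 : Real.sqrt ((2 : ℝ) / 2 ^ 2) = Real.sqrt 2 / 2 := by
    rw [show (2 : ℝ) / 2 ^ 2 = (Real.sqrt 2 / 2) ^ 2 by
      rw [div_pow, Real.sq_sqrt] <;> norm_num]
    exact Real.sqrt_sq (by positivity)
  have hEEP : EE α k P = 2 * (1 / (2 * Real.pi) - Real.sqrt 2 / 4 * α) := by
    unfold EE
    rw [hPuu, hPvv, hnkP, hs4]
    have ht2 : Real.sqrt 2 * Real.sqrt 2 = 2 := Real.mul_self_sqrt (by norm_num)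
    have ht0 : Real.sqrt 2 ≠ 0 := by positivity
    have hπ : Real.pi ≠ 0 := Real.pi_ne_zero
    have hsq : Real.sqrt 2 ^ 2 = 2 := Real.sq_sqrt (by norm_num)
    field_simp
    ring_nf
    rw [hsq]
    ring
  have hEEPC : ((EE α k P : ℝ) : ℂ) = 2 * ((1 / (2 * Real.pi) - Real.sqrt 2 / 4 * α : ℝ) : ℂ) := by
    rw [hEEP]; push_cast; ring
  -- derivative of the explicit formula at P
  have hdd : DifferentiableAt ℝ
      (fun z : Fin (n + 1) → ℂ => (1 / 2 : ℂ) * ((EE α k z : ℝ) : ℂ)) P := hdE.const_mul _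
  have hcproj : HasFDerivAt (fun z : Fin (n + 1) → ℂ => z k)
      (ContinuousLinearMap.proj k : (Fin (n + 1) → ℂ) →L[ℝ] ℂ) P :=
    (ContinuousLinearMap.proj k : (Fin (n + 1) → ℂ) →L[ℝ] ℂ).hasFDerivAt
  have hH := hcproj.fun_mul hdd.hasFDerivAt
  simp only [hPk, zero_smul, zero_add] at hH
  have hfe : (fun z : Fin (n + 1) → ℂ => (1 / 2 : ℂ) * z k * ((EE α k z : ℝ) : ℂ))
      = fun z : Fin (n + 1) → ℂ => z k * ((1 / 2 : ℂ) * ((EE α k z : ℝ) : ℂ)) :=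
    funext fun z => by ring
  unfold wirtingerD dirDeriv
  rw [hev.fderiv_eq, hfe, hH.fderiv]
  by_cases hjk : j = k
  · subst hjk
    simp only [ContinuousLinearMap.add_apply, ContinuousLinearMap.smul_apply,
      ContinuousLinearMap.proj_apply, ContinuousLinearMap.zero_apply, zero_smul, zero_add,
      Pi.single_eq_same, smul_eq_mul, if_pos rfl]
    rw [hEEPC]
    simp only [if_true]
    linear_combination (-(((1 / (2 * Real.pi) - Real.sqrt 2 / 4 * α : ℝ) : ℂ)) / 2) *
      Complex.I_mul_I
  · simp only [ContinuousLinearMap.add_apply, ContinuousLinearMap.smul_apply,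
      ContinuousLinearMap.proj_apply, ContinuousLinearMap.zero_apply, zero_smul, zero_add,
      Pi.single_eq_of_ne (Ne.symm hjk), smul_eq_mul, if_neg hjk]
    ring
end

section
/- Let n ≥ 2 and ψ ∈ ℂ, and define Q : ℂ^{n+1} → ℂ by Q(Z) = ∑_{i=0}^n Z_i^{n+1} − (n+1)·ψ·Z₀^n·Z₁. If Z, W ∈ ℂ^{n+1} satisfy |Z_i| = |W_i| for all 0 ≤ i ≤ n and Z₀·conj(Z₁) = W₀·conj(W₁), then ∑_{i=0}^n |∂Q/∂Z_i(Z)|² = ∑_{i=0}^n |∂Q/∂Z_i(W)|². In other words, the squared gradient norm ‖∇Q‖² is a function of only the absolute values |Z₀|, …, |Z_n| together with the real and imaginary parts of Z₀·conj(Z₁). -/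
noncomputable def prj (n : ℕ) (i : Fin (n + 1)) : (Fin (n + 1) → ℂ) →L[ℂ] ℂ :=
  ContinuousLinearMap.proj i

theorem mixed_hasFDerivAt (n : ℕ) (ψ : ℂ) (Z : Fin (n + 1) → ℂ) :
    HasFDerivAt (fun Z : Fin (n + 1) → ℂ =>
        (∑ i, Z i ^ (n + 1)) - ((n : ℂ) + 1) * ψ * Z 0 ^ n * Z 1)
      ((∑ i, ((((n + 1 : ℕ)) : ℂ) * Z i ^ n) • prj n i)
        - (((n : ℂ) + 1) * ψ) • ((Z 0 ^ n) • prj n 1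
            + (Z 1) • (((n : ℕ) * Z 0 ^ (n - 1) : ℂ) • prj n 0))) Z := by
  have h1 : ∀ i : Fin (n + 1), HasFDerivAt (fun Z : Fin (n + 1) → ℂ => Z i ^ (n + 1))
      (((((n + 1 : ℕ)) : ℂ) * Z i ^ n) • prj n i) Z := fun i => by
    have := (hasDerivAt_pow (n + 1) (Z i)).comp_hasFDerivAt Z (prj n i).hasFDerivAt
    exact this.congr_fderiv (by simp)
  have h0 : HasFDerivAt (fun Z : Fin (n + 1) → ℂ => Z 0 ^ n)
      ((((n : ℕ) * Z 0 ^ (n - 1) : ℂ)) • prj n 0) Z :=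
    (hasDerivAt_pow n (Z 0)).comp_hasFDerivAt Z (prj n 0).hasFDerivAt
  have hprod := h0.mul (prj n 1).hasFDerivAt
  have hc := hprod.const_mul (((n : ℂ) + 1) * ψ)
  have hsum := HasFDerivAt.fun_sum (fun i (_ : i ∈ Finset.univ) => h1 i)
  have H := hsum.sub hc
  exact (H.congr_fderiv rfl).congr_of_eventuallyEq
    (Filter.Eventually.of_forall fun y => by simp [prj, mul_assoc])

/-- gradient-norm invariance for the 0–1 mixed family, Section 4.2.
For `Q Z = ∑ Z_i^{n+1} − (n+1) ψ Z₀ⁿ Z₁`, the squared gradient norm `‖∇Q‖²` depends only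
on the absolute values `|Z_i|` and on `Z₀ · conj Z₁`. -/
theorem gradient_norm_invariance_mixed_family
    (n : ℕ) (hn : 2 ≤ n) (ψ : ℂ)
    (Q : (Fin (n + 1) → ℂ) → ℂ)
    (hQ : ∀ Z : Fin (n + 1) → ℂ,
      Q Z = (∑ i, Z i ^ (n + 1)) - ((n : ℂ) + 1) * ψ * Z 0 ^ n * Z 1)
    (Z W : Fin (n + 1) → ℂ)
    (habs : ∀ i, ‖Z i‖ = ‖W i‖)
    (hmix : Z 0 * starRingEnd ℂ (Z 1) = W 0 * starRingEnd ℂ (W 1)) :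
    ∑ i, ‖fderiv ℂ Q Z (Pi.single i 1)‖ ^ 2 =
      ∑ i, ‖fderiv ℂ Q W (Pi.single i 1)‖ ^ 2 := by
  obtain ⟨m, rfl⟩ : ∃ m, n = m + 2 := ⟨n - 2, by omega⟩
  have hQe : Q = fun Z : Fin (m + 2 + 1) → ℂ =>
      (∑ i, Z i ^ (m + 2 + 1)) - ((↑(m + 2) : ℂ) + 1) * ψ * Z 0 ^ (m + 2) * Z 1 :=
    funext hQ
  subst hQe
  rw [(mixed_hasFDerivAt (m + 2) ψ Z).fderiv, (mixed_hasFDerivAt (m + 2) ψ W).fderiv]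
  have habs2 : ∀ x : ℂ, ‖x‖ ^ 2 = (x * (starRingEnd ℂ) x).re := fun x => by
    rw [Complex.mul_conj]; simp [Complex.sq_norm]
  have e : ∀ i, Z i * (starRingEnd ℂ) (Z i) = W i * (starRingEnd ℂ) (W i) := fun i => by
    rw [Complex.mul_conj, Complex.mul_conj, Complex.normSq_eq_norm_sq, Complex.normSq_eq_norm_sq,
      habs i]
  have hmix' : (starRingEnd ℂ) (Z 0) * Z 1 = (starRingEnd ℂ) (W 0) * W 1 := by
    have := congrArg (starRingEnd ℂ) hmix
    simpa [mul_comm] using this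
  have h01 : (0 : Fin (m + 2 + 1)) ≠ 1 := by simp [Fin.ext_iff]
  apply Finset.sum_congr rfl
  intro j _
  simp only [ContinuousLinearMap.sub_apply, ContinuousLinearMap.coe_sum',
    Finset.sum_apply, ContinuousLinearMap.smul_apply, ContinuousLinearMap.add_apply,
    prj, ContinuousLinearMap.proj_apply, Pi.single_apply, smul_eq_mul, mul_ite, mul_one,
    mul_zero, Finset.sum_ite_eq, Finset.sum_ite_eq', Finset.mem_univ, if_true]
  have hpow : m + 2 - 1 = m + 1 := by omega
  rw [hpow]
  rcases eq_or_ne j 0 with rfl | hj0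
  · have ite1 : ∀ x : ℂ, (if (1 : Fin (m + 2 + 1)) = 0 then x else 0) = 0 :=
      fun x => if_neg (Ne.symm h01)
    have ite0 : ∀ x : ℂ, (if (0 : Fin (m + 2 + 1)) = 0 then x else 0) = x :=
      fun x => if_pos rfl
    simp only [ite1, zero_add, if_true]
    rw [habs2, habs2]
    congr 1
    simp only [map_sub, map_mul, map_add, map_pow, map_natCast, map_one, map_ofNat]
    have eP1 : (Z 0 * (starRingEnd ℂ) (Z 0)) ^ (m + 1)
        = (W 0 * (starRingEnd ℂ) (W 0)) ^ (m + 1) := by rw [e 0]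
    have eP2 : (Z 0 * (starRingEnd ℂ) (Z 0)) ^ (m + 2)
        = (W 0 * (starRingEnd ℂ) (W 0)) ^ (m + 2) := by rw [e 0]
    push_cast
    linear_combination
      ((m : ℂ) + 3) ^ 2 * eP2
      - ((m : ℂ) + 3) ^ 2 * ((m : ℂ) + 2) * (starRingEnd ℂ) ψ *
          ((Z 0 * (starRingEnd ℂ) (Z 1)) * eP1
            + (W 0 * (starRingEnd ℂ) (W 0)) ^ (m + 1) * hmix)
      - ((m : ℂ) + 3) ^ 2 * ((m : ℂ) + 2) * ψ *
          (((starRingEnd ℂ) (Z 0) * Z 1) * eP1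
            + (W 0 * (starRingEnd ℂ) (W 0)) ^ (m + 1) * hmix')
      + ((m : ℂ) + 3) ^ 2 * ((m : ℂ) + 2) ^ 2 * ψ * (starRingEnd ℂ) ψ *
          ((Z 1 * (starRingEnd ℂ) (Z 1)) * eP1
            + (W 0 * (starRingEnd ℂ) (W 0)) ^ (m + 1) * e 1)
  · rcases eq_or_ne j 1 with rfl | hj1
    · have ite1 : ∀ x : ℂ, (if (1 : Fin (m + 2 + 1)) = 1 then x else 0) = x :=
        fun x => if_pos rfl
      have ite0 : ∀ x : ℂ, (if (0 : Fin (m + 2 + 1)) = 1 then x else 0) = 0 :=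
        fun x => if_neg h01
      simp only [ite0, add_zero, if_true]
      rw [habs2, habs2]
      congr 1
      simp only [map_sub, map_mul, map_add, map_pow, map_natCast, map_one, map_ofNat]
      have eP2 : (Z 0 * (starRingEnd ℂ) (Z 0)) ^ (m + 2)
          = (W 0 * (starRingEnd ℂ) (W 0)) ^ (m + 2) := by rw [e 0]
      have eQ2 : (Z 1 * (starRingEnd ℂ) (Z 1)) ^ (m + 2)
          = (W 1 * (starRingEnd ℂ) (W 1)) ^ (m + 2) := by rw [e 1]
      have eR2 : (Z 0 * (starRingEnd ℂ) (Z 1)) ^ (m + 2)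
          = (W 0 * (starRingEnd ℂ) (W 1)) ^ (m + 2) := by rw [hmix]
      have eS2 : ((starRingEnd ℂ) (Z 0) * Z 1) ^ (m + 2)
          = ((starRingEnd ℂ) (W 0) * W 1) ^ (m + 2) := by rw [hmix']
      push_cast
      linear_combination
        ((m : ℂ) + 3) ^ 2 * (eQ2 - (starRingEnd ℂ) ψ * eS2 - ψ * eR2
          + ψ * (starRingEnd ℂ) ψ * eP2)
    · have ite1 : ∀ x : ℂ, (if (1 : Fin (m + 2 + 1)) = j then x else 0) = 0 :=
        fun x => if_neg (Ne.symm hj1)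
      have ite0 : ∀ x : ℂ, (if (0 : Fin (m + 2 + 1)) = j then x else 0) = 0 :=
        fun x => if_neg (Ne.symm hj0)
      simp only [ite0, ite1, add_zero, mul_zero, sub_zero]
      rw [habs2, habs2]
      congr 1
      have eJ2 : (Z j * (starRingEnd ℂ) (Z j)) ^ (m + 2)
          = (W j * (starRingEnd ℂ) (W j)) ^ (m + 2) := by rw [e j]
      simp only [map_mul, map_pow, map_natCast]
      push_cast
      linear_combination ((m : ℂ) + 3) ^ 2 * eJ2
end
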